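/- arXiv:1911.08841 — 10 statements merged into one kernel-verified Lean document; each statement's English description precedes it below -/
import Mathlib

section
/- If z♭ is a double zero of θ(q♭, ·), i.e. θ(q♭,z♭) = 0, ∂θ/∂z(q♭,z♭) = 0, and ∂²θ/∂z²(q♭,z♭) ≠ 0, where 0 < |q♭| < 1, then ∂θ/∂q(q♭,z♭) = (z♭)²/(2q♭) · ∂²θ/∂z²(q♭,z♭), which is nonzero. In particular the gradient of θ at (q♭,z♭) is nonzero. -/
/-- The partial theta function θ(q,z) = ∑_{j=0}^∞ q^{j(j+1)/2} z^j. -/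
noncomputable def partialTheta (q z : ℂ) : ℂ := ∑' j : ℕ, q ^ (j * (j + 1) / 2) * z ^ j


/-- master summability lemma -/
lemma summable_master (a R : ℝ) (ha0 : 0 ≤ a) (ha : a < 1) (hR : 0 ≤ R) (m : ℕ) :
    Summable (fun j : ℕ => (j : ℝ) ^ m * (a ^ (j * (j + 1) / 2) * R ^ j)) := by
  obtain ⟨k, hk⟩ : ∃ k : ℕ, a ^ k * R < 1 := by
    rcases eq_or_lt_of_le hR with h | h
    · exact ⟨0, by simp [← h]⟩
    · obtain ⟨k, hk⟩ := exists_pow_lt_of_lt_one (show (0:ℝ) < 1 / R by positivity) ha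
      exact ⟨k, by rw [← lt_div_iff₀ h]; exact hk⟩
  have hsum : Summable (fun j : ℕ => (j : ℝ) ^ m * (a ^ k * R) ^ j) := by
    apply summable_pow_mul_geometric_of_norm_lt_one
    rw [Real.norm_eq_abs, abs_of_nonneg (by positivity)]
    exact hk
  apply hsum.of_norm_bounded_eventually_nat
  filter_upwards [Filter.eventually_ge_atTop (2 * k)] with j hj
  have h1 : k * j ≤ j * (j + 1) / 2 := by
    rw [Nat.le_div_iff_mul_le (by norm_num)]
    calc k * j * 2 = j * (2 * k) := by ring
    _ ≤ j * (j + 1) := Nat.mul_le_mul_left _ (by omega)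
  have h2 : a ^ (j * (j + 1) / 2) ≤ (a ^ k) ^ j := by
    rw [← pow_mul]
    exact pow_le_pow_of_le_one ha0 ha.le h1
  rw [Real.norm_eq_abs, abs_of_nonneg (by positivity), mul_pow]
  have : (0:ℝ) ≤ R ^ j := by positivity
  calc (j:ℝ) ^ m * (a ^ (j * (j + 1) / 2) * R ^ j)
      ≤ (j:ℝ) ^ m * ((a ^ k) ^ j * R ^ j) := by gcongr
  _ = (j:ℝ) ^ m * ((a^k)^j * R ^ j) := rfl

lemma summable_theta_terms (q z : ℂ) (hq : ‖q‖ < 1) :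
    Summable (fun j : ℕ => q ^ (j * (j + 1) / 2) * z ^ j) := by
  have h := summable_master ‖q‖ ‖z‖ (norm_nonneg q) hq (norm_nonneg z) 0
  apply Summable.of_norm
  apply h.of_norm_bounded_eventually_nat
  filter_upwards with j
  simp [norm_mul, norm_pow, abs_of_nonneg, mul_nonneg, pow_nonneg]

lemma thetaZ1 (q : ℂ) (hq : ‖q‖ < 1) (w : ℂ) :
    HasDerivAt (fun y : ℂ => partialTheta q y)
      (∑' j : ℕ, q ^ (j * (j + 1) / 2) * ((j : ℂ) * w ^ (j - 1))) w := by
  unfold partialTheta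
  set R : ℝ := ‖w‖ + 1 with hR
  have hR1 : (1:ℝ) ≤ R := by rw [hR]; linarith [norm_nonneg w]
  apply hasDerivAt_tsum_of_isPreconnected
    (u := fun j : ℕ => (j : ℝ) ^ 1 * (‖q‖ ^ (j * (j + 1) / 2) * R ^ j))
    (summable_master ‖q‖ R (norm_nonneg q) hq (by linarith) 1)
    Metric.isOpen_ball (convex_ball (0:ℂ) R).isPreconnected
    (fun j y _ => (hasDerivAt_pow j y).const_mul _)
    ?_ (y₀ := w) ?_ (summable_theta_terms q w hq) ?_
  · intro j y hy
    rw [Metric.mem_ball, dist_zero_right] at hy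
    rw [norm_mul, norm_mul, norm_pow, norm_pow, Complex.norm_natCast]
    have h1 : ‖y‖ ^ (j - 1) ≤ R ^ j := by
      calc ‖y‖ ^ (j-1) ≤ R ^ (j-1) := by gcongr
      _ ≤ R ^ j := pow_le_pow_right₀ hR1 (by omega)
    calc ‖q‖ ^ (j*(j+1)/2) * ((j:ℝ) * ‖y‖ ^ (j-1))
        ≤ ‖q‖ ^ (j*(j+1)/2) * ((j:ℝ) * R ^ j) := by gcongr
    _ = (j:ℝ)^1 * (‖q‖ ^ (j*(j+1)/2) * R ^ j) := by ring
  · simp [hR]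
  · simp [hR]

lemma thetaZ2 (q : ℂ) (hq0 : 0 < ‖q‖) (hq : ‖q‖ < 1) (w : ℂ) :
    HasDerivAt (fun y : ℂ => ∑' j : ℕ, q ^ (j * (j + 1) / 2) * ((j : ℂ) * y ^ (j - 1)))
      (∑' j : ℕ, q ^ (j * (j + 1) / 2) * ((j : ℂ) * ((↑(j-1) : ℂ) * w ^ (j - 1 - 1)))) w := by
  set R : ℝ := ‖w‖ + 1 with hR
  have hR1 : (1:ℝ) ≤ R := by rw [hR]; linarith [norm_nonneg w]
  have hsw : Summable (fun j : ℕ => q ^ (j * (j + 1) / 2) * ((j : ℂ) * w ^ (j - 1))) := by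
    apply Summable.of_norm
    apply (summable_master ‖q‖ R (norm_nonneg q) hq (by linarith) 1).of_norm_bounded_eventually_nat
    filter_upwards with j
    rw [Real.norm_eq_abs, abs_of_nonneg (by positivity), norm_mul, norm_mul, norm_pow, norm_pow,
      Complex.norm_natCast]
    have h1 : ‖w‖ ^ (j - 1) ≤ R ^ j :=
      le_trans (show ‖w‖ ^ (j-1) ≤ R ^ (j-1) by gcongr; simp [hR]) (pow_le_pow_right₀ hR1 (by omega))
    calc ‖q‖ ^ (j*(j+1)/2) * ((j:ℝ) * ‖w‖ ^ (j-1))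
        ≤ ‖q‖ ^ (j*(j+1)/2) * ((j:ℝ) * R ^ j) := by gcongr
    _ = (j:ℝ)^1 * (‖q‖ ^ (j*(j+1)/2) * R ^ j) := by ring
  apply hasDerivAt_tsum_of_isPreconnected
    (u := fun j : ℕ => (j : ℝ) ^ 2 * (‖q‖ ^ (j * (j + 1) / 2) * R ^ j))
    (summable_master ‖q‖ R (norm_nonneg q) hq (by linarith) 2)
    Metric.isOpen_ball (convex_ball (0:ℂ) R).isPreconnected
    (fun j y _ => (((hasDerivAt_pow (j-1) y)).const_mul (j:ℂ)).const_mul _)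
    ?_ (y₀ := w) ?_ hsw ?_
  · intro j y hy
    rw [Metric.mem_ball, dist_zero_right] at hy
    rw [norm_mul, norm_mul, norm_mul, norm_pow, norm_pow, Complex.norm_natCast,
      Complex.norm_natCast]
    have h1 : ‖y‖ ^ (j - 1 - 1) ≤ R ^ j := by
      calc ‖y‖ ^ (j-1-1) ≤ R ^ (j-1-1) := by gcongr
      _ ≤ R ^ j := pow_le_pow_right₀ hR1 (by omega)
    have hj1 : ((j - 1 : ℕ):ℝ) ≤ (j:ℝ) := Nat.cast_le.mpr (Nat.sub_le j 1)
    calc ‖q‖ ^ (j*(j+1)/2) * ((j:ℝ) * ((↑(j-1):ℝ) * ‖y‖ ^ (j-1-1)))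
        ≤ ‖q‖ ^ (j*(j+1)/2) * ((j:ℝ) * ((j:ℝ) * R ^ j)) := by gcongr
    _ = (j:ℝ)^2 * (‖q‖ ^ (j*(j+1)/2) * R ^ j) := by ring
  · simp [hR]
  · simp [hR]

lemma thetaQ (q z : ℂ) (hq0 : 0 < ‖q‖) (hq1 : ‖q‖ < 1) :
    HasDerivAt (fun y : ℂ => partialTheta y z)
      (∑' j : ℕ, (↑(j * (j + 1) / 2) : ℂ) * q ^ (j * (j + 1) / 2 - 1) * z ^ j) q := by
  unfold partialTheta
  set r : ℝ := (‖q‖ + 1) / 2 with hr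
  have hr0 : 0 < r := by positivity
  have hr1 : r < 1 := by rw [hr]; linarith
  have hqr : ‖q‖ < r := by rw [hr]; linarith
  apply hasDerivAt_tsum_of_isPreconnected
    (u := fun j : ℕ => (j : ℝ) ^ 2 * (r ^ (j * (j + 1) / 2) * ‖z‖ ^ j) / r)
    (((summable_master r ‖z‖ hr0.le hr1 (norm_nonneg z) 2)).div_const r)
    Metric.isOpen_ball (convex_ball (0:ℂ) r).isPreconnected
    (fun j y _ => (hasDerivAt_pow (j*(j+1)/2) y).mul_const _)
    ?_ (y₀ := q) ?_ (summable_theta_terms q z hq1) ?_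
  · intro j y hy
    rw [Metric.mem_ball, dist_zero_right] at hy
    rcases Nat.eq_zero_or_pos j with h0 | hj
    · subst h0; simp
    have hE1 : 1 ≤ j * (j + 1) / 2 := by
      rw [Nat.le_div_iff_mul_le (by norm_num)]; nlinarith
    have hEj : j * (j + 1) / 2 ≤ j * j := by
      have h : j * (j + 1) ≤ j * j * 2 := by nlinarith
      calc j * (j+1)/2 ≤ j * j * 2 / 2 := Nat.div_le_div_right h
      _ = j * j := Nat.mul_div_cancel _ (by norm_num)
    rw [norm_mul, norm_mul, norm_pow, norm_pow, Complex.norm_natCast]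
    have hrE : r ^ (j * (j + 1) / 2) = r ^ (j * (j + 1) / 2 - 1) * r := by
      rw [← pow_succ]; congr 1; omega
    have h1 : ‖y‖ ^ (j * (j + 1) / 2 - 1) ≤ r ^ (j * (j + 1) / 2 - 1) := by
      gcongr
    have h2 : (↑(j * (j + 1) / 2) : ℝ) ≤ (j:ℝ) * j := by exact_mod_cast hEj
    calc (↑(j * (j + 1) / 2):ℝ) * ‖y‖ ^ (j * (j + 1) / 2 - 1) * ‖z‖ ^ j
        ≤ ((j:ℝ) * j) * r ^ (j * (j + 1) / 2 - 1) * ‖z‖ ^ j := by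
          gcongr
    _ = (j:ℝ)^2 * (r ^ (j * (j + 1) / 2) * ‖z‖ ^ j) / r := by
          rw [hrE]; field_simp
  · rw [Metric.mem_ball, dist_zero_right]; exact hqr
  · rw [Metric.mem_ball, dist_zero_right]; exact hqr

lemma summable_t1 (q z : ℂ) (hq : ‖q‖ < 1) :
    Summable (fun j : ℕ => q ^ (j * (j + 1) / 2) * ((j : ℂ) * z ^ (j - 1))) := by
  apply Summable.of_norm
  apply (summable_master ‖q‖ (‖z‖+1) (norm_nonneg q) hq (by positivity) 1).of_norm_bounded_eventually_nat
  filter_upwards with j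
  rw [Real.norm_eq_abs, abs_of_nonneg (by positivity), norm_mul, norm_mul, norm_pow, norm_pow,
    Complex.norm_natCast]
  have h1 : ‖z‖ ^ (j - 1) ≤ (‖z‖+1) ^ j :=
    le_trans (show ‖z‖^(j-1) ≤ (‖z‖+1)^(j-1) by gcongr; linarith)
      (pow_le_pow_right₀ (by linarith [norm_nonneg z]) (by omega))
  calc ‖q‖ ^ (j*(j+1)/2) * ((j:ℝ) * ‖z‖ ^ (j-1))
      ≤ ‖q‖ ^ (j*(j+1)/2) * ((j:ℝ) * (‖z‖+1) ^ j) := by gcongr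
  _ = (j:ℝ)^1 * (‖q‖ ^ (j*(j+1)/2) * (‖z‖+1) ^ j) := by ring

lemma summable_t2 (q z : ℂ) (hq : ‖q‖ < 1) :
    Summable (fun j : ℕ => q ^ (j * (j + 1) / 2) * ((j : ℂ) * ((↑(j-1) : ℂ) * z ^ (j - 1 - 1)))) := by
  apply Summable.of_norm
  apply (summable_master ‖q‖ (‖z‖+1) (norm_nonneg q) hq (by positivity) 2).of_norm_bounded_eventually_nat
  filter_upwards with j
  rw [Real.norm_eq_abs, abs_of_nonneg (by positivity), norm_mul, norm_mul, norm_mul, norm_pow,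
    norm_pow, Complex.norm_natCast, Complex.norm_natCast]
  have h1 : ‖z‖ ^ (j - 1 - 1) ≤ (‖z‖+1) ^ j :=
    le_trans (show ‖z‖^(j-1-1) ≤ (‖z‖+1)^(j-1-1) by gcongr; linarith)
      (pow_le_pow_right₀ (by linarith [norm_nonneg z]) (by omega))
  have hj1 : ((j - 1 : ℕ):ℝ) ≤ (j:ℝ) := Nat.cast_le.mpr (Nat.sub_le j 1)
  calc ‖q‖ ^ (j*(j+1)/2) * ((j:ℝ) * ((↑(j-1):ℝ) * ‖z‖ ^ (j-1-1)))
      ≤ ‖q‖ ^ (j*(j+1)/2) * ((j:ℝ) * ((j:ℝ) * (‖z‖+1) ^ j)) := by gcongr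
  _ = (j:ℝ)^2 * (‖q‖ ^ (j*(j+1)/2) * (‖z‖+1) ^ j) := by ring

lemma theta_pointwise (q z : ℂ) (j : ℕ) :
    2 * q * ((↑(j * (j + 1) / 2) : ℂ) * q ^ (j * (j + 1) / 2 - 1) * z ^ j) =
      2 * z * (q ^ (j * (j + 1) / 2) * ((j : ℂ) * z ^ (j - 1))) +
      z ^ 2 * (q ^ (j * (j + 1) / 2) * ((j : ℂ) * ((↑(j-1) : ℂ) * z ^ (j - 1 - 1)))) := by
  match j with
  | 0 => simp
  | 1 => norm_num; ring
  | (n+2) =>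
    set E := (n+2) * ((n+2) + 1) / 2 with hE
    have hE1 : 1 ≤ E := by
      rw [hE, Nat.le_div_iff_mul_le (by norm_num)]; nlinarith
    have hE2 : 2 * E = (n+2) * ((n+2)+1) := by
      rw [hE]; exact Nat.mul_div_cancel' (Nat.even_mul_succ_self (n+2)).two_dvd
    obtain ⟨k, hk⟩ : ∃ k, E = k + 1 := ⟨E - 1, by omega⟩
    rw [hk] at hE2 ⊢
    have hE2C : 2 * ((k:ℂ) + 1) = ((n:ℂ) + 2) * ((n:ℂ) + 2 + 1) := by exact_mod_cast hE2
    simp only [show k+1-1 = k by omega, show n+2-1 = n+1 by omega, show n+1-1 = n by omega]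
    push_cast
    linear_combination (q^(k+1) * z^(n+2)) * hE2C

theorem partialTheta_double_zero_q_deriv (q z : ℂ) (hq0 : 0 < ‖q‖) (hq1 : ‖q‖ < 1)
    (h0 : partialTheta q z = 0)
    (h1 : deriv (fun w : ℂ => partialTheta q w) z = 0)
    (h2 : deriv (deriv (fun w : ℂ => partialTheta q w)) z ≠ 0) :
    deriv (fun w : ℂ => partialTheta w z) q =
      z ^ 2 / (2 * q) * deriv (deriv (fun w : ℂ => partialTheta q w)) z ∧
    deriv (fun w : ℂ => partialTheta w z) q ≠ 0 := by
  have hz : z ≠ 0 := by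
    intro hzz
    rw [hzz, partialTheta, tsum_eq_single 0 (by intro b hb; simp [zero_pow hb])] at h0
    simp at h0
  have hqne : q ≠ 0 := by simpa using hq0
  have h2q : (2:ℂ) * q ≠ 0 := mul_ne_zero two_ne_zero hqne
  set A : ℂ := ∑' j : ℕ, q ^ (j*(j+1)/2) * ((j:ℂ) * z^(j-1)) with hAdef
  set B : ℂ := ∑' j : ℕ, q ^ (j*(j+1)/2) * ((j:ℂ) * ((↑(j-1):ℂ) * z^(j-1-1))) with hBdef
  set C : ℂ := ∑' j : ℕ, (↑(j*(j+1)/2):ℂ) * q ^ (j*(j+1)/2 - 1) * z^j with hCdef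
  have hA : deriv (fun w : ℂ => partialTheta q w) z = A := (thetaZ1 q hq1 z).deriv
  have hA0 : A = 0 := by rw [← hA]; exact h1
  have hder : deriv (fun w : ℂ => partialTheta q w)
      = fun y => ∑' j : ℕ, q ^ (j*(j+1)/2) * ((j:ℂ) * y^(j-1)) :=
    funext fun y => (thetaZ1 q hq1 y).deriv
  have hB : deriv (deriv (fun w : ℂ => partialTheta q w)) z = B := by
    rw [hder]; exact (thetaZ2 q hq0 hq1 z).deriv
  have hC : deriv (fun w : ℂ => partialTheta w z) q = C := (thetaQ q z hq0 hq1).deriv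
  have key : 2 * q * C = 2 * z * A + z ^ 2 * B := by
    rw [hAdef, hBdef, hCdef, ← tsum_mul_left, ← tsum_mul_left, ← tsum_mul_left,
      ← Summable.tsum_add ((summable_t1 q z hq1).mul_left (2*z))
        ((summable_t2 q z hq1).mul_left (z^2))]
    exact tsum_congr (theta_pointwise q z)
  rw [hA0, mul_zero, zero_add] at key
  have heq : C = z ^ 2 / (2 * q) * B := by
    field_simp
    linear_combination key
  refine ⟨by rw [hC, hB]; exact heq, ?_⟩
  rw [hC, heq]
  exact mul_ne_zero (div_ne_zero (pow_ne_zero _ hz) h2q) (hB ▸ h2)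
end

section
/- For every q ∈ (-1, 0) and every k ∈ ℕ with k ≥ 1, writing ρ := |q|, one has 0 < θ(q, -ρ^{-2k}) < ρ^{2k} + ρ^{4k+1}. -/
open Filter Finset

/-- The real partial theta function θ(q,x) = ∑_{j=0}^∞ q^{j(j+1)/2} x^j. -/
noncomputable def thetaR (q x : ℝ) : ℝ := ∑' j : ℕ, q ^ (j * (j + 1) / 2) * x ^ j

private lemma np_eq (m n : ℕ) (h : m % 2 = n % 2) : (-1:ℝ)^m = (-1)^n := by
  rcases Nat.even_or_odd m with hm | hm
  · have hn : Even n := by rw [Nat.even_iff] at *; omega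
    rw [hm.neg_one_pow, hn.neg_one_pow]
  · have hn : Odd n := by rw [Nat.odd_iff] at *; omega
    rw [hm.neg_one_pow, hn.neg_one_pow]

private lemma np_ne (m n : ℕ) (h : (m + n) % 2 = 1) : (-1:ℝ)^m = -(-1)^n := by
  rcases Nat.even_or_odd m with hm | hm
  · have hn : Odd n := by rw [Nat.even_iff] at hm; rw [Nat.odd_iff]; omega
    rw [hm.neg_one_pow, hn.neg_one_pow, neg_neg]
  · have hn : Even n := by rw [Nat.odd_iff] at hm; rw [Nat.even_iff]; omega
    rw [hm.neg_one_pow, hn.neg_one_pow]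

/-- Regroup a summable series over ℕ into blocks of 4. -/
private lemma tsum_group4 (u : ℕ → ℝ) (hu : Summable u)
    (hG : Summable fun m => u (4*m) + u (4*m+1) + u (4*m+2) + u (4*m+3)) :
    ∑' m, (u (4*m) + u (4*m+1) + u (4*m+2) + u (4*m+3)) = ∑' n, u n := by
  have h1 := hu.hasSum.tendsto_sum_nat
  have h2 := hG.hasSum.tendsto_sum_nat
  have key : ∀ M, ∑ m ∈ range M, (u (4*m) + u (4*m+1) + u (4*m+2) + u (4*m+3))
      = ∑ i ∈ range (4*M), u i := by
    intro M
    induction M with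
    | zero => simp
    | succ M ih =>
        rw [Finset.sum_range_succ, ih, show 4*(M+1) = 4*M+1+1+1+1 by ring,
          Finset.sum_range_succ, Finset.sum_range_succ, Finset.sum_range_succ,
          Finset.sum_range_succ]
        ring
  have hm : Tendsto (fun M : ℕ => 4*M) atTop atTop :=
    tendsto_atTop_atTop.mpr (fun b => ⟨b, fun a ha => by omega⟩)
  have h3 : Tendsto (fun M => ∑ i ∈ range (4*M), u i) atTop (nhds (∑' n, u n)) :=
    h1.comp hm
  have h2' : Tendsto (fun M => ∑ i ∈ range (4*M), u i) atTop
      (nhds (∑' m, (u (4*m) + u (4*m+1) + u (4*m+2) + u (4*m+3)))) := by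
    simpa only [key] using h2
  exact tendsto_nhds_unique h2' h3

theorem thetaR_neg_q_even_power (q : ℝ) (hq : q ∈ Set.Ioo (-1 : ℝ) 0) (k : ℕ) (hk : 1 ≤ k) :
    0 < thetaR q (-(|q| ^ (2 * k))⁻¹) ∧
      thetaR q (-(|q| ^ (2 * k))⁻¹) < |q| ^ (2 * k) + |q| ^ (4 * k + 1) := by
  obtain ⟨hq1, hq0⟩ := hq
  set ρ : ℝ := -q with hρdef
  have hρ0 : 0 < ρ := by rw [hρdef]; linarith
  have hρ1 : ρ < 1 := by rw [hρdef]; linarith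
  have hρne : ρ ≠ 0 := ne_of_gt hρ0
  have habs : |q| = ρ := abs_of_neg hq0
  have hqρ : q = -ρ := by rw [hρdef, neg_neg]
  set f : ℕ → ℝ := fun j => q ^ (j*(j+1)/2) * (-(|q| ^ (2*k))⁻¹) ^ j with hfdef
  set e : ℕ → ℕ := fun i => (4*k+i)*(i+1)/2 with hedef
  set g : ℕ → ℝ := fun i => (-1:ℝ)^(i*(i+3)/2) * ρ^(e i) with hgdef
  -- basic division identities
  have he2 : ∀ i, (e i) * 2 = (4*k+i)*(i+1) := by
    intro i
    simp only [hedef]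
    apply Nat.div_mul_cancel
    rcases Nat.even_or_odd i with hi | hi
    · exact ((Even.add ⟨2*k, by ring⟩ hi : Even (4*k+i)).mul_right _).two_dvd
    · exact ((hi.add_one).mul_left _).two_dvd
  have hE2 : ∀ j : ℕ, ((j*(j+1)/2 : ℕ) : ℤ) * 2 = (j:ℤ)*((j:ℤ)+1) := by
    intro j
    have h := Nat.div_mul_cancel (Nat.even_mul_succ_self j).two_dvd
    exact_mod_cast h
  -- representation of the terms
  have hrepr : ∀ j : ℕ, f j = (-1:ℝ)^(j*(j+1)/2 + j) *
      ρ ^ (((j*(j+1)/2 : ℕ) : ℤ) - 2*(k:ℤ)*(j:ℤ)) := by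
    intro j
    simp only [hfdef]
    rw [habs, hqρ]
    rw [neg_pow ρ, neg_pow ((ρ^(2*k))⁻¹), inv_pow, ← pow_mul]
    have hz : ρ^(j*(j+1)/2) * (ρ^(2*k*j))⁻¹
        = ρ ^ (((j*(j+1)/2 : ℕ) : ℤ) - 2*(k:ℤ)*(j:ℤ)) := by
      rw [← zpow_natCast ρ (j*(j+1)/2), ← zpow_natCast ρ (2*k*j), ← zpow_neg,
        ← zpow_add₀ hρne]
      congr 1
    calc (-1:ℝ)^(j*(j+1)/2) * ρ^(j*(j+1)/2) * ((-1)^j * (ρ^(2*k*j))⁻¹)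
        = ((-1:ℝ)^(j*(j+1)/2) * (-1)^j) * (ρ^(j*(j+1)/2) * (ρ^(2*k*j))⁻¹) := by ring
      _ = (-1:ℝ)^(j*(j+1)/2 + j) * ρ ^ (((j*(j+1)/2 : ℕ) : ℤ) - 2*(k:ℤ)*(j:ℤ)) := by
          rw [hz, pow_add]
  -- pairing: the first 4k terms cancel
  have hpair : ∀ j, j < 4*k → f j + f (4*k-1-j) = 0 := by
    intro j hj
    set d := 4*k-1-j with hddef
    have hd : j + d + 1 = 4*k := by omega
    have hEeq : ((j*(j+1)/2 : ℕ) : ℤ) - 2*(k:ℤ)*(j:ℤ)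
        = ((d*(d+1)/2 : ℕ) : ℤ) - 2*(k:ℤ)*(d:ℤ) := by
      have hdz : (j:ℤ) + (d:ℤ) + 1 = 4*(k:ℤ) := by exact_mod_cast hd
      have h2 : (((j*(j+1)/2 : ℕ) : ℤ) - 2*(k:ℤ)*(j:ℤ)) * 2
          = (((d*(d+1)/2 : ℕ) : ℤ) - 2*(k:ℤ)*(d:ℤ)) * 2 := by
        linear_combination hE2 j - hE2 d + ((j:ℤ) - (d:ℤ)) * hdz
      linarith
    have hpar : ((j*(j+1)/2 + j) + (d*(d+1)/2 + d)) % 2 = 1 := by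
      have hsum : (j+d)*(j+d+1) = j*(j+1) + d*(d+1) + 2*(j*d) := by ring
      have hprod : (j+d)*(j+d+1) = 4*((j+d)*k) := by
        rw [show j+d+1 = 4*k from hd]; ring
      have h2an := Nat.div_mul_cancel (Nat.even_mul_succ_self j).two_dvd
      have h2bn := Nat.div_mul_cancel (Nat.even_mul_succ_self d).two_dvd
      have hPd : j*d % 2 = 0 := by
        rcases Nat.even_or_odd j with hje | hjo
        · exact Nat.even_iff.mp (hje.mul_right d)
        · have hde : Even d := by rw [Nat.even_iff]; rw [Nat.odd_iff] at hjo; omega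
          exact Nat.even_iff.mp (hde.mul_left j)
      have key : (j*(j+1)/2) * 2 + (d*(d+1)/2) * 2 + 2*(j*d) = 4*((j+d)*k) := by
        rw [h2an, h2bn]; linarith [hsum, hprod]
      obtain ⟨a, ha⟩ : ∃ a, j*(j+1)/2 = a := ⟨_, rfl⟩
      obtain ⟨b, hb⟩ : ∃ b, d*(d+1)/2 = b := ⟨_, rfl⟩
      obtain ⟨P, hP⟩ : ∃ P, j*d = P := ⟨_, rfl⟩
      obtain ⟨Q, hQ⟩ : ∃ Q, (j+d)*k = Q := ⟨_, rfl⟩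
      rw [ha, hb, hP, hQ] at key
      rw [hP] at hPd
      rw [ha, hb]
      omega
    rw [hrepr j, hrepr d, hEeq, np_ne _ _ hpar]
    ring
  -- the tail terms
  have htail : ∀ i : ℕ, f (4*k + i) = g i := by
    intro i
    rw [hrepr (4*k+i)]
    have hEe : (((4*k+i)*((4*k+i)+1)/2 : ℕ) : ℤ) - 2*(k:ℤ)*((4*k+i : ℕ) : ℤ)
        = ((e i : ℕ) : ℤ) := by
      have h2a := hE2 (4*k+i)
      have h2e : ((e i : ℕ) : ℤ) * 2 = ((4*k+i : ℕ) : ℤ)*((i:ℤ)+1) := by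
        have h := he2 i; exact_mod_cast h
      have h2 : ((((4*k+i)*((4*k+i)+1)/2 : ℕ) : ℤ) - 2*(k:ℤ)*((4*k+i : ℕ) : ℤ)) * 2
          = ((e i : ℕ) : ℤ) * 2 := by
        push_cast at h2a h2e ⊢
        linear_combination h2a - h2e
      linarith
    have hpar : ((4*k+i)*((4*k+i)+1)/2 + (4*k+i)) % 2 = (i*(i+3)/2) % 2 := by
      have h2a := Nat.div_mul_cancel (Nat.even_mul_succ_self (4*k+i)).two_dvd
      have h2c : (i*(i+3)/2) * 2 = i*(i+3) := by
        apply Nat.div_mul_cancel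
        have hev : Even (i*(i+3)) := by
          have hident : i*(i+3) = i*(i+1) + 2*i := by ring
          rw [hident]
          exact (Nat.even_mul_succ_self i).add ⟨i, by ring⟩
        exact hev.two_dvd
      have hid : (4*k+i)*((4*k+i)+1) + 2*i = i*(i+3) + 4*(4*k*k+2*k*i+k) := by ring
      have key : ((4*k+i)*((4*k+i)+1)/2)*2 + 2*i = (i*(i+3)/2)*2 + 4*(4*k*k+2*k*i+k) := by
        rw [h2a, h2c]; exact hid
      obtain ⟨a, ha⟩ : ∃ a, (4*k+i)*((4*k+i)+1)/2 = a := ⟨_, rfl⟩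
      obtain ⟨c, hc⟩ : ∃ c, i*(i+3)/2 = c := ⟨_, rfl⟩
      obtain ⟨R, hR⟩ : ∃ R, 4*k*k+2*k*i+k = R := ⟨_, rfl⟩
      rw [ha, hc, hR] at key
      rw [ha, hc]
      omega
    rw [np_eq _ _ hpar, hEe, zpow_natCast]
  -- monotonicity and size of e
  have he_mono : ∀ i, e i < e (i+1) := by
    intro i
    have h1 := he2 i
    have h2 := he2 (i+1)
    have hid : (4*k+(i+1))*((i+1)+1) = (4*k+i)*(i+1) + (4*k+2*i+2) := by ring
    obtain ⟨a, ha⟩ : ∃ a, e i = a := ⟨_, rfl⟩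
    obtain ⟨b, hb⟩ : ∃ b, e (i+1) = b := ⟨_, rfl⟩
    obtain ⟨P, hP⟩ : ∃ P, (4*k+i)*(i+1) = P := ⟨_, rfl⟩
    obtain ⟨Q, hQ⟩ : ∃ Q, (4*k+(i+1))*((i+1)+1) = Q := ⟨_, rfl⟩
    rw [ha, hP] at h1
    rw [hb, hQ] at h2
    rw [hP, hQ] at hid
    rw [ha, hb]
    omega
  have he_strict : StrictMono e := strictMono_nat_of_lt_succ he_mono
  have he_ge : ∀ i, i ≤ e i := by
    intro i
    have h1 := he2 i
    have h4 : 4*(i+1) ≤ (4*k+i)*(i+1) := by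
      apply Nat.mul_le_mul_right
      omega
    obtain ⟨a, ha⟩ : ∃ a, e i = a := ⟨_, rfl⟩
    obtain ⟨P, hP⟩ : ∃ P, (4*k+i)*(i+1) = P := ⟨_, rfl⟩
    rw [ha, hP] at h1
    rw [hP] at h4
    rw [ha]
    omega
  -- summability
  have hgabs : ∀ i, |g i| = ρ ^ (e i) := by
    intro i
    simp only [hgdef]
    rw [abs_mul, abs_pow, abs_pow, abs_neg, abs_one, one_pow, one_mul,
      abs_of_pos hρ0]
  have hgle : ∀ i, |g i| ≤ ρ ^ i := by
    intro i
    rw [hgabs i]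
    exact pow_le_pow_of_le_one hρ0.le hρ1.le (he_ge i)
  have hsum_g : Summable g := by
    apply Summable.of_abs
    exact Summable.of_nonneg_of_le (fun i => abs_nonneg _) hgle
      (summable_geometric_of_lt_one hρ0.le hρ1)
  have hsum_sub : ∀ c : ℕ, Summable (fun m : ℕ => g (4*m+c)) := by
    intro c
    have hgeo : Summable (fun m : ℕ => ρ^c * (ρ^4)^m) :=
      (summable_geometric_of_lt_one (pow_nonneg hρ0.le 4)
        (pow_lt_one₀ hρ0.le hρ1 (by norm_num))).mul_left _
    apply Summable.of_abs
    apply Summable.of_nonneg_of_le (fun m => abs_nonneg _) _ hgeo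
    intro m
    calc |g (4*m+c)| ≤ ρ^(4*m+c) := hgle _
      _ = ρ^c * (ρ^4)^m := by rw [pow_add, pow_mul]; ring
  have hsum_f : Summable f := by
    apply (summable_nat_add_iff (4*k)).mp
    have heq : (fun n => f (n + 4*k)) = g := by
      funext i
      rw [show i + 4*k = 4*k + i by ring, htail i]
    rw [heq]
    exact hsum_g
  -- split the series
  have hzero : ∑ j ∈ range (4*k), f j = 0 := by
    have hrefl := Finset.sum_range_reflect f (4*k)
    have h2 : (∑ j ∈ range (4*k), f j) + (∑ j ∈ range (4*k), f j) = 0 := by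
      nth_rewrite 1 [← hrefl]
      rw [← Finset.sum_add_distrib]
      apply Finset.sum_eq_zero
      intro j hj
      have hj' := Finset.mem_range.mp hj
      have h := hpair j hj'
      linarith
    linarith
  have hθ : thetaR q (-(|q| ^ (2*k))⁻¹) = ∑' i, g i := by
    have h0 : thetaR q (-(|q| ^ (2*k))⁻¹) = ∑' j, f j := rfl
    have hT : ∑' i, f (i + 4*k) = ∑' i, g i := by
      apply tsum_congr
      intro i
      rw [show i + 4*k = 4*k + i by ring, htail i]
    rw [h0, ← Summable.sum_add_tsum_nat_add (4*k) hsum_f, hzero, hT, zero_add]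
  -- explicit values of g on residues mod 4
  have hg4 : ∀ m, g (4*m) = ρ^(e (4*m)) := by
    intro m
    have hexp : (4*m)*((4*m)+3)/2 = 2*(m*(4*m+3)) :=
      Nat.div_eq_of_eq_mul_left (by norm_num) (by ring)
    simp only [hgdef]
    rw [hexp, pow_mul]
    norm_num
  have hg4a : ∀ m, g (4*m+1) = ρ^(e (4*m+1)) := by
    intro m
    have hexp : (4*m+1)*((4*m+1)+3)/2 = 2*((4*m+1)*(m+1)) :=
      Nat.div_eq_of_eq_mul_left (by norm_num) (by ring)
    simp only [hgdef]
    rw [hexp, pow_mul]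
    norm_num
  have hg4b : ∀ m, g (4*m+2) = -ρ^(e (4*m+2)) := by
    intro m
    have hexp : (4*m+2)*((4*m+2)+3)/2 = 2*(4*m*m+7*m+2)+1 :=
      Nat.div_eq_of_eq_mul_left (by norm_num) (by ring)
    simp only [hgdef]
    rw [hexp, pow_succ, pow_mul]
    norm_num
  have hg4c : ∀ m, g (4*m+3) = -ρ^(e (4*m+3)) := by
    intro m
    have hexp : (4*m+3)*((4*m+3)+3)/2 = 2*(4*m*m+9*m+4)+1 :=
      Nat.div_eq_of_eq_mul_left (by norm_num) (by ring)
    simp only [hgdef]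
    rw [hexp, pow_succ, pow_mul]
    norm_num
  have hlt : ∀ i j : ℕ, i < j → ρ^(e j) < ρ^(e i) := fun i j hij =>
    pow_lt_pow_right_of_lt_one₀ hρ0 hρ1 (he_strict hij)
  -- lower bound
  have hsum_G : Summable (fun m => g (4*m) + g (4*m+1) + g (4*m+2) + g (4*m+3)) := by
    have h0 : Summable (fun m : ℕ => g (4*m)) := by
      have := hsum_sub 0
      simpa using this
    exact ((h0.add (hsum_sub 1)).add (hsum_sub 2)).add (hsum_sub 3)
  have hGpos : ∀ m, 0 < g (4*m) + g (4*m+1) + g (4*m+2) + g (4*m+3) := by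
    intro m
    rw [hg4 m, hg4a m, hg4b m, hg4c m]
    have h1 := hlt (4*m) (4*m+2) (by omega)
    have h2 := hlt (4*m+1) (4*m+3) (by omega)
    linarith
  have hTpos : 0 < ∑' i, g i := by
    rw [← tsum_group4 g hsum_g hsum_G]
    exact Summable.tsum_pos hsum_G (fun m => (hGpos m).le) 0 (hGpos 0)
  -- upper bound
  have hg0 : g 0 = ρ^(2*k) := by
    have h0 : e 0 = 2*k := by
      have h := he2 0
      simp only [Nat.add_zero, Nat.zero_add, Nat.mul_one] at h
      omega
    simp only [hgdef]
    rw [h0]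
    norm_num
  have hg1 : g 1 = ρ^(4*k+1) := by
    have h1 : e 1 = 4*k+1 := by
      have h := he2 1
      obtain ⟨a, ha⟩ : ∃ a, e 1 = a := ⟨_, rfl⟩
      rw [ha] at h ⊢
      omega
    simp only [hgdef]
    rw [h1]
    norm_num
  have hsum_u : Summable (fun i => g (i + 2)) := (summable_nat_add_iff 2).mpr hsum_g
  have hsub' : ∀ c c' : ℕ, 4+c = c' → Summable (fun m : ℕ => g (4*m+c+2)) := by
    intro c c' h
    exact hsum_sub (c+2)
  have hsum_H : Summable (fun m => (fun i => g (i+2)) (4*m) + (fun i => g (i+2)) (4*m+1)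
      + (fun i => g (i+2)) (4*m+2) + (fun i => g (i+2)) (4*m+3)) := by
    simp only []
    exact ((hsum_sub 2).add (hsub' 1 5 rfl)).add (hsub' 2 6 rfl) |>.add (hsub' 3 7 rfl)
  have hHneg : ∀ m, (fun i => g (i+2)) (4*m) + (fun i => g (i+2)) (4*m+1)
      + (fun i => g (i+2)) (4*m+2) + (fun i => g (i+2)) (4*m+3) < 0 := by
    intro m
    simp only []
    rw [show 4*m+1+2 = 4*m+3 by omega, show 4*m+2+2 = 4*(m+1) by omega,
      show 4*m+3+2 = 4*(m+1)+1 by omega]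
    rw [hg4b m, hg4c m, hg4 (m+1), hg4a (m+1)]
    have h1 : ρ^(e (4*(m+1))) < ρ^(e (4*m+2)) := hlt _ _ (by omega)
    have h2 : ρ^(e (4*(m+1)+1)) < ρ^(e (4*m+3)) := hlt _ _ (by omega)
    linarith
  have hUneg : ∑' i, g (i+2) < 0 := by
    rw [← tsum_group4 (fun i => g (i+2)) hsum_u hsum_H]
    have hpos : 0 < ∑' m, -((fun i => g (i+2)) (4*m) + (fun i => g (i+2)) (4*m+1)
        + (fun i => g (i+2)) (4*m+2) + (fun i => g (i+2)) (4*m+3)) :=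
      Summable.tsum_pos hsum_H.neg (fun m => by linarith [hHneg m]) 0 (by linarith [hHneg 0])
    rw [tsum_neg] at hpos
    linarith
  have hsplit2 : ∑ i ∈ range 2, g i + ∑' i, g (i + 2) = ∑' i, g i :=
    Summable.sum_add_tsum_nat_add 2 hsum_g
  have hr2 : ∑ i ∈ range 2, g i = ρ^(2*k) + ρ^(4*k+1) := by
    rw [Finset.sum_range_succ, Finset.sum_range_one, hg0, hg1]
  constructor
  · rw [hθ]
    exact hTpos
  · rw [hθ, habs]
    linarith
end

section
/- For q ∈ (-1,0) with ρ := |q|, the series θ(q, -ρ^{-2k}) = Σ_{j=0}^∞ (-1)^{j(j+3)/2} ρ^{-2kj + j(j+1)/2} has its first 4k terms cancelling pairwise (the term for j cancels the term for 4k - 1 - j, 0 ≤ j ≤ 4k-1), so that θ(q, -ρ^{-2k}) = Σ_{j=4k}^∞ (-1)^{j(j+3)/2} ρ^{-2kj + j(j+1)/2}. -/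
noncomputable def aTerm (ρ : ℝ) (k j : ℕ) : ℝ :=
  (-1 : ℝ) ^ (j * (j + 3) / 2) * ρ ^ (((j * (j + 1) / 2 : ℕ) : ℤ) - 2 * (k : ℤ) * (j : ℤ))

lemma term_eq (ρ : ℝ) (hρ : 0 < ρ) (k j : ℕ) :
    (-ρ) ^ (j * (j + 1) / 2) * (-(ρ ^ (2 * k))⁻¹) ^ j = aTerm ρ k j := by
  have hρ0 : ρ ≠ 0 := ne_of_gt hρ
  have h1 : (-(ρ ^ (2 * k))⁻¹) ^ j = (-1 : ℝ) ^ j * ρ ^ (-(2 * (k:ℤ) * j)) := by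
    rw [show -(ρ ^ (2 * k))⁻¹ = (-1 : ℝ) * (ρ ^ (2*k))⁻¹ by ring, mul_pow]
    congr 1
    rw [← zpow_natCast ρ (2*k), ← zpow_neg, ← zpow_natCast _ j, ← zpow_mul]
    congr 1
    push_cast; ring
  have h2 : (-ρ) ^ (j * (j + 1) / 2) = (-1:ℝ) ^ (j * (j + 1) / 2) * ρ ^ (j * (j + 1) / 2) := by
    rw [neg_pow]
  have hsign : (-1:ℝ) ^ (j * (j + 1) / 2) * (-1:ℝ) ^ j = (-1:ℝ) ^ (j * (j + 3) / 2) := by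
    rw [← pow_add]
    congr 1
    have h3 : j * (j + 3) = j * (j + 1) + j * 2 := by ring
    rw [h3, Nat.add_mul_div_right _ _ (by norm_num : (0:ℕ) < 2)]
  have hpow : (ρ : ℝ) ^ (j * (j + 1) / 2) * ρ ^ (-(2 * (k:ℤ) * j)) =
      ρ ^ (((j * (j + 1) / 2 : ℕ) : ℤ) - 2 * (k : ℤ) * (j : ℤ)) := by
    rw [← zpow_natCast ρ (j * (j+1)/2), ← zpow_add₀ hρ0]
    congr 1
    try ring
  rw [h1, h2, aTerm]
  calc (-1:ℝ) ^ (j * (j + 1) / 2) * ρ ^ (j * (j + 1) / 2) * ((-1:ℝ) ^ j * ρ ^ (-(2 * (k:ℤ) * j)))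
      = ((-1:ℝ) ^ (j * (j + 1) / 2) * (-1:ℝ) ^ j) * (ρ ^ (j * (j + 1) / 2) * ρ ^ (-(2 * (k:ℤ) * j))) := by ring
    _ = _ := by rw [hsign, hpow]

lemma aux_odd (k a b : ℕ) (h : (2*a) + (2*b+1) + 1 = 4*k) :
    Odd ((2*a)*((2*a)+3)/2 + (2*b+1)*((2*b+1)+3)/2) := by
  have e1 : (2*a)*((2*a)+3)/2 = a*(2*a+3) := by
    rw [show (2*a)*((2*a)+3) = 2*(a*(2*a+3)) by ring, Nat.mul_div_cancel_left _ (by norm_num)]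
  have e2 : (2*b+1)*((2*b+1)+3)/2 = (2*b+1)*(b+2) := by
    rw [show (2*b+1)*((2*b+1)+3) = 2*((2*b+1)*(b+2)) by ring, Nat.mul_div_cancel_left _ (by norm_num)]
  rw [e1, e2, Nat.odd_add]
  simp only [Nat.odd_mul, Nat.even_mul]
  simp only [Nat.odd_iff, Nat.even_iff]
  omega

lemma odd_sum (k j m : ℕ) (h : j + m + 1 = 4*k) :
    Odd (j*(j+3)/2 + m*(m+3)/2) := by
  rcases Nat.even_or_odd j with ⟨a, rfl⟩ | ⟨a, rfl⟩
  · obtain ⟨b, rfl⟩ : Odd m := by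
      rcases Nat.even_or_odd m with ⟨b, rfl⟩ | hm
      · exfalso; omega
      · exact hm
    have := aux_odd k a b (by omega)
    convert this using 3 <;> ring
  · obtain ⟨b, rfl⟩ : Even m := by
      rcases Nat.even_or_odd m with hm | ⟨b, rfl⟩
      · exact hm
      · exfalso; omega
    rw [Nat.add_comm]
    have := aux_odd k b a (by omega)
    convert this using 3 <;> ring

lemma exp_eq (k j m : ℕ) (h : j + m + 1 = 4*k) :
    ((j * (j + 1) / 2 : ℕ) : ℤ) - 2 * (k : ℤ) * (j : ℤ) =
    ((m * (m + 1) / 2 : ℕ) : ℤ) - 2 * (k : ℤ) * (m : ℤ) := by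
  have e1 : (j*(j+1)/2) * 2 = j*(j+1) :=
    Nat.div_mul_cancel (even_iff_two_dvd.mp (Nat.even_mul_succ_self j))
  have e2 : (m*(m+1)/2) * 2 = m*(m+1) :=
    Nat.div_mul_cancel (even_iff_two_dvd.mp (Nat.even_mul_succ_self m))
  have e1' : ((j*(j+1)/2 : ℕ) : ℤ) * 2 = (j:ℤ)*((j:ℤ)+1) := by exact_mod_cast e1
  have e2' : ((m*(m+1)/2 : ℕ) : ℤ) * 2 = (m:ℤ)*((m:ℤ)+1) := by exact_mod_cast e2
  have hz : (j:ℤ) + (m:ℤ) + 1 = 4*(k:ℤ) := by exact_mod_cast h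
  have h2 : (((j * (j + 1) / 2 : ℕ) : ℤ) - 2 * (k : ℤ) * (j : ℤ)) * 2 =
      (((m * (m + 1) / 2 : ℕ) : ℤ) - 2 * (k : ℤ) * (m : ℤ)) * 2 := by
    linear_combination e1' - e2' + ((j:ℤ) - (m:ℤ)) * hz
  omega

lemma pair_cancel (ρ : ℝ) (k j m : ℕ) (h : j + m + 1 = 4*k) :
    aTerm ρ k j + aTerm ρ k m = 0 := by
  have hsign : (-1:ℝ) ^ (j*(j+3)/2) = -(-1:ℝ) ^ (m*(m+3)/2) := by
    have ho := odd_sum k j m h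
    have h1 : (-1:ℝ) ^ (j*(j+3)/2 + m*(m+3)/2) = -1 := ho.neg_one_pow
    rw [pow_add] at h1
    have h2 : ((-1:ℝ) ^ (m*(m+3)/2)) * ((-1:ℝ) ^ (m*(m+3)/2)) = 1 := by
      rw [← pow_add]
      exact Even.neg_one_pow ⟨_, rfl⟩
    calc (-1:ℝ) ^ (j*(j+3)/2)
        = (-1:ℝ) ^ (j*(j+3)/2) * (((-1:ℝ) ^ (m*(m+3)/2)) * ((-1:ℝ) ^ (m*(m+3)/2))) := by
          rw [h2, mul_one]
      _ = ((-1:ℝ) ^ (j*(j+3)/2) * ((-1:ℝ) ^ (m*(m+3)/2))) * ((-1:ℝ) ^ (m*(m+3)/2)) := by ring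
      _ = -(-1:ℝ) ^ (m*(m+3)/2) := by rw [h1]; ring
  unfold aTerm
  rw [hsign, exp_eq k j m h]
  ring

lemma aTerm_summable (ρ : ℝ) (hρ0 : 0 < ρ) (hρ1 : ρ < 1) (k : ℕ) :
    Summable (aTerm ρ k) := by
  rw [← summable_nat_add_iff (4*k+1)]
  apply Summable.of_norm
  apply Summable.of_nonneg_of_le (fun j => norm_nonneg _) ?_
    (summable_geometric_of_lt_one hρ0.le hρ1)
  intro j
  set n := j + (4*k+1) with hn
  have hnorm : ‖aTerm ρ k n‖ = ρ ^ (((n * (n + 1) / 2 : ℕ) : ℤ) - 2 * (k : ℤ) * (n : ℤ)) := by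
    rw [aTerm, norm_mul, norm_pow, norm_neg, norm_one, one_pow, one_mul,
      Real.norm_eq_abs, abs_of_pos (zpow_pos hρ0 _)]
  rw [hnorm]
  have hexp : (n : ℤ) ≤ ((n * (n + 1) / 2 : ℕ) : ℤ) - 2 * (k : ℤ) * (n : ℤ) := by
    have e1 : (n*(n+1)/2) * 2 = n*(n+1) :=
      Nat.div_mul_cancel (even_iff_two_dvd.mp (Nat.even_mul_succ_self n))
    have e1' : ((n*(n+1)/2 : ℕ) : ℤ) * 2 = (n:ℤ)*((n:ℤ)+1) := by exact_mod_cast e1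
    have hnk : (4*(k:ℤ)+1) ≤ (n:ℤ) := by
      have : 4*k+1 ≤ n := by omega
      exact_mod_cast this
    nlinarith [hnk, e1']
  calc ρ ^ (((n * (n + 1) / 2 : ℕ) : ℤ) - 2 * (k : ℤ) * (n : ℤ))
      ≤ ρ ^ (n : ℤ) := zpow_le_zpow_right_of_le_one₀ hρ0 hρ1.le hexp
    _ = ρ ^ n := zpow_natCast ρ n
    _ ≤ ρ ^ j := pow_le_pow_of_le_one hρ0.le hρ1.le (by omega)

/-- The first `4k` terms of the series for `θ(q, -ρ^{-2k})` cancel pairwise, so the value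
equals the tail sum `∑_{j=4k}^∞ (-1)^{j(j+3)/2} ρ^{-2kj + j(j+1)/2}`. -/
theorem thetaR_tail_formula (q : ℝ) (hq : q ∈ Set.Ioo (-1 : ℝ) 0) (k : ℕ) (hk : 1 ≤ k) :
    thetaR q (-(|q| ^ (2 * k))⁻¹) =
      ∑' j : ℕ, (-1 : ℝ) ^ ((j + 4 * k) * ((j + 4 * k) + 3) / 2) *
        |q| ^ ((((j + 4 * k) * ((j + 4 * k) + 1) / 2 : ℕ) : ℤ) - 2 * k * (j + 4 * k)) := by
  obtain ⟨hq1, hq2⟩ := hq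
  have hρ0 : 0 < |q| := abs_pos.mpr (ne_of_lt hq2)
  have hρ1 : |q| < 1 := abs_lt.mpr ⟨hq1, lt_trans hq2 one_pos⟩
  have hqeq : q = -|q| := by rw [abs_of_neg hq2, neg_neg]
  have hsum := aTerm_summable |q| hρ0 hρ1 k
  have hzero : ∑ j ∈ Finset.range (4*k), aTerm |q| k j = 0 := by
    have hrefl := Finset.sum_range_reflect (fun j => aTerm |q| k j) (4*k)
    have hneg : ∀ j ∈ Finset.range (4*k),
        aTerm |q| k (4*k - 1 - j) = -aTerm |q| k j := by
      intro j hj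
      rw [Finset.mem_range] at hj
      have := pair_cancel |q| k j (4*k - 1 - j) (by omega)
      linarith
    rw [Finset.sum_congr rfl hneg, Finset.sum_neg_distrib] at hrefl
    linarith
  calc thetaR q (-(|q| ^ (2 * k))⁻¹)
      = ∑' j : ℕ, aTerm |q| k j := by
        unfold thetaR
        refine tsum_congr fun j => ?_
        nth_rewrite 1 [hqeq]
        exact term_eq |q| hρ0 k j
    _ = ∑ j ∈ Finset.range (4*k), aTerm |q| k j + ∑' j : ℕ, aTerm |q| k (j + 4*k) :=
        (Summable.sum_add_tsum_nat_add (4*k) hsum).symm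
    _ = ∑' j : ℕ, aTerm |q| k (j + 4*k) := by rw [hzero, zero_add]
    _ = _ := by
        refine tsum_congr fun j => ?_
        rw [aTerm]
        congr 2
        all_goals push_cast; ring
end

section
/- For q ∈ (0,1) and any integer k ≥ 1, one has 0 < θ(q, -q^{-k}) < q^k. -/
private lemma two_mul_T (n : ℕ) : 2 * (n * (n + 1) / 2) = n * (n + 1) := by
  obtain ⟨m, hm⟩ := Nat.even_mul_succ_self n
  omega

theorem thetaR_at_neg_inv_pow (q : ℝ) (hq : q ∈ Set.Ioo (0 : ℝ) 1) (k : ℕ) (hk : 1 ≤ k) :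
    0 < thetaR q (-(q ^ k)⁻¹) ∧ thetaR q (-(q ^ k)⁻¹) < q ^ k := by
  obtain ⟨hq0, hq1⟩ := hq
  have hqne : q ≠ 0 := ne_of_gt hq0
  set x : ℝ := -(q ^ k)⁻¹ with hx
  set a : ℕ → ℝ := fun j => q ^ (j * (j + 1) / 2) * x ^ j with ha
  -- the exponent of the tail terms
  set g : ℕ → ℕ := fun j => k * j + j * (j + 1) / 2 with hg
  -- tail formula : a (j + 2k) = (-1)^j * q^(k + g j)
  have htail : ∀ j : ℕ, a (j + 2 * k) = (-1 : ℝ) ^ j * q ^ (k + g j) := by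
    intro j
    have hexp : (j + 2 * k) * (j + 2 * k + 1) / 2
        = k * (j + 2 * k) + (k + g j) := by
      have h1 := two_mul_T (j + 2 * k)
      have h2 := two_mul_T j
      have e : (j + 2 * k) * (j + 2 * k + 1)
          = j * (j + 1) + 2 * (k * (j + 2 * k) + k + k * j) := by ring
      simp only [hg]
      linarith
    have hxpow : x ^ (j + 2 * k) = (-1 : ℝ) ^ j * (q ^ (k * (j + 2 * k)))⁻¹ := by
      rw [hx, neg_pow, inv_pow, ← pow_mul]
      have : (-1 : ℝ) ^ (j + 2 * k) = (-1 : ℝ) ^ j := by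
        rw [pow_add, pow_mul]; norm_num
      rw [this]
    simp only [ha, hexp, pow_add, hxpow]
    field_simp
  -- the first 2k terms cancel in pairs
  have hpair : ∀ j j' : ℕ, j + j' + 1 = 2 * k → a j + a j' = 0 := by
    intro j j' hjj'
    have hTeq : j * (j + 1) / 2 + k * j' = j' * (j' + 1) / 2 + k * j := by
      have h1 := two_mul_T j
      have h2 := two_mul_T j'
      have e : j * (j + 1) + (j + j' + 1) * j' = j' * (j' + 1) + (j + j' + 1) * j := by
        ring
      have e2 : (j + j' + 1) * j' = 2 * (k * j') := by rw [hjj']; ring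
      have e3 : (j + j' + 1) * j = 2 * (k * j) := by rw [hjj']; ring
      linarith
    have hsgn : (-1 : ℝ) ^ j' = -(-1 : ℝ) ^ j := by
      have hodd : Odd (j + j') := ⟨k - 1, by omega⟩
      have h1 : ((-1 : ℝ)) ^ (j + j') = -1 := hodd.neg_one_pow
      rw [pow_add] at h1
      have hsq : (-1 : ℝ) ^ j * (-1 : ℝ) ^ j = 1 := by
        rw [← pow_add]
        exact Even.neg_one_pow ⟨j, rfl⟩
      linear_combination ((-1 : ℝ) ^ j) * h1 - ((-1 : ℝ) ^ j') * hsq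
    have hxj : ∀ m : ℕ, x ^ m = (-1 : ℝ) ^ m * (q ^ (k * m))⁻¹ := by
      intro m; rw [hx, neg_pow, inv_pow, ← pow_mul]
    have key : q ^ (j * (j + 1) / 2) * q ^ (k * j') * (-1 : ℝ) ^ j
        + q ^ (j' * (j' + 1) / 2) * q ^ (k * j) * (-1 : ℝ) ^ j' = 0 := by
      rw [← pow_add, ← pow_add, hTeq, hsgn]; ring
    have hne1 : (q : ℝ) ^ (k * j) ≠ 0 := pow_ne_zero _ hqne
    have hne2 : (q : ℝ) ^ (k * j') ≠ 0 := pow_ne_zero _ hqne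
    simp only [ha, hxj]
    field_simp
    field_simp at key
    linarith [key]
  -- summability of the tail
  have hb : Summable (fun j => (-1 : ℝ) ^ j * q ^ (k + g j)) := by
    apply Summable.of_abs
    have habs : ∀ j : ℕ, |(-1 : ℝ) ^ j * q ^ (k + g j)| = q ^ (k + g j) := by
      intro j
      rw [abs_mul, abs_pow, abs_neg, abs_one, one_pow, one_mul,
        abs_of_pos (pow_pos hq0 _)]
    simp only [habs]
    apply Summable.of_nonneg_of_le (fun j => le_of_lt (pow_pos hq0 _))
      (fun j => ?_) (summable_geometric_of_lt_one (le_of_lt hq0) hq1)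
    refine pow_le_pow_of_le_one (le_of_lt hq0) (le_of_lt hq1) ?_
    have h1 : j ≤ k * j := Nat.le_mul_of_pos_left j (by omega)
    simp only [hg]
    omega
  have hsa : Summable a := by
    rw [← summable_nat_add_iff (2 * k)]
    exact hb.congr fun j => (htail j).symm
  -- theta = tsum of the tail
  have hsplit := Summable.sum_add_tsum_nat_add (2 * k) hsa
  have hzero : (∑ j ∈ Finset.range (2 * k), a j) = 0 := by
    have hrefl : (∑ j ∈ Finset.range (2 * k), a (2 * k - 1 - j))
        = ∑ j ∈ Finset.range (2 * k), a j := by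
      exact Finset.sum_range_reflect a (2 * k)
    have h2 : (∑ j ∈ Finset.range (2 * k), a j)
        + (∑ j ∈ Finset.range (2 * k), a j) = 0 := by
      nth_rewrite 1 [← hrefl]
      rw [← Finset.sum_add_distrib]
      apply Finset.sum_eq_zero
      intro j hj
      rw [add_comm]
      exact hpair j (2 * k - 1 - j) (by simp at hj; omega)
    linarith
  have htheta : thetaR q x = q ^ k * ∑' j : ℕ, (-1 : ℝ) ^ j * q ^ (g j) := by
    have : thetaR q x = ∑' j : ℕ, a (j + 2 * k) := by
      unfold thetaR
      rw [← hsplit, hzero, zero_add]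
    rw [this]
    rw [tsum_congr htail]
    rw [← tsum_mul_left]
    congr 1 with j
    rw [pow_add]; ring
  -- set up the alternating series c j = (-1)^j q^(g j)
  set c : ℕ → ℝ := fun j => (-1 : ℝ) ^ j * q ^ (g j) with hc
  have hsc : Summable c := by
    have := hb.mul_left ((q : ℝ) ^ k)⁻¹
    apply this.congr
    intro j
    simp only [hc, pow_add]
    field_simp
  have hgmono : ∀ j : ℕ, g j < g (j + 1) := by
    intro j
    have h1 := two_mul_T j
    have h2 := two_mul_T (j + 1)
    have e : (j + 1) * (j + 1 + 1) = j * (j + 1) + 2 * (j + 1) := by ring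
    simp only [hg]
    nlinarith
  have hglt : ∀ m n : ℕ, m < n → g m < g n := by
    intro m n hmn
    induction n with
    | zero => omega
    | succ n ih =>
      rcases Nat.lt_or_ge m n with h | h
      · exact lt_trans (ih h) (hgmono n)
      · have : m = n := by omega
        subst this; exact hgmono m
  have hqpow_lt : ∀ m n : ℕ, m < n → q ^ (g n) < q ^ (g m) := fun m n hmn =>
    pow_lt_pow_right_of_lt_one₀ hq0 hq1 (hglt m n hmn)
  -- even and odd parts
  have hce : ∀ i : ℕ, c (2 * i) = q ^ (g (2 * i)) := by
    intro i; simp [hc, pow_mul]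
  have hco : ∀ i : ℕ, c (2 * i + 1) = -q ^ (g (2 * i + 1)) := by
    intro i; simp [hc, pow_add, pow_mul]
  have hse : Summable fun i => q ^ (g (2 * i)) :=
    ((hsc.comp_injective (fun a b h => by dsimp at h; omega : Function.Injective (2 * ·))).congr
      (fun i => (hce i))).congr (fun i => rfl)
  have hso : Summable fun i => q ^ (g (2 * i + 1)) := by
    have h1 : Summable fun i => c (2 * i + 1) :=
      hsc.comp_injective (fun a b h => by dsimp at h; omega : Function.Injective (2 * · + 1))
    have := h1.neg
    apply this.congr
    intro i
    rw [hco i]; ring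
  have hsum_eo : (∑' i : ℕ, c (2 * i)) + (∑' i : ℕ, c (2 * i + 1)) = ∑' j, c j := by
    refine tsum_even_add_odd ?_ ?_
    · exact hsc.comp_injective (fun a b h => by dsimp at h; omega : Function.Injective (2 * ·))
    · exact hsc.comp_injective (fun a b h => by dsimp at h; omega : Function.Injective (2 * · + 1))
  have heq1 : (∑' i : ℕ, c (2 * i)) = ∑' i : ℕ, q ^ (g (2 * i)) := tsum_congr hce
  have heq2 : (∑' i : ℕ, c (2 * i + 1)) = -∑' i : ℕ, q ^ (g (2 * i + 1)) := by
    rw [tsum_congr hco, tsum_neg]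
  have hS : ∑' j, c j
      = (∑' i : ℕ, q ^ (g (2 * i))) - ∑' i : ℕ, q ^ (g (2 * i + 1)) := by
    rw [← hsum_eo, heq1, heq2]; ring
  -- lower bound : 0 < ∑ c
  have hlow : 0 < ∑' j, c j := by
    rw [hS, sub_pos]
    exact Summable.tsum_lt_tsum_of_nonneg (i := 0) (fun i => le_of_lt (pow_pos hq0 _))
      (fun i => le_of_lt (hqpow_lt (2 * i) (2 * i + 1) (by omega)))
      (by simpa using hqpow_lt 0 1 (by omega)) hse
  -- upper bound : ∑ c < 1
  have hupp : (∑' j, c j) < 1 := by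
    have hshift : (∑' i : ℕ, q ^ (g (2 * i)))
        = 1 + ∑' i : ℕ, q ^ (g (2 * (i + 1))) := by
      have h0 : g 0 = 0 := by simp [hg]
      have := Summable.tsum_eq_zero_add hse
      simpa [h0] using this
    have hcmp : (∑' i : ℕ, q ^ (g (2 * (i + 1)))) < ∑' i : ℕ, q ^ (g (2 * i + 1)) := by
      exact Summable.tsum_lt_tsum_of_nonneg (i := 0) (fun i => le_of_lt (pow_pos hq0 _))
        (fun i => le_of_lt (hqpow_lt (2 * i + 1) (2 * (i + 1)) (by omega)))
        (by simpa using hqpow_lt 1 2 (by omega)) hso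
    rw [hS, hshift]
    linarith
  refine ⟨?_, ?_⟩
  · rw [htheta] at *
    exact mul_pos (pow_pos hq0 k) hlow
  · rw [htheta]
    calc q ^ k * ∑' j, c j < q ^ k * 1 := by
          exact mul_lt_mul_of_pos_left hupp (pow_pos hq0 k)
      _ = q ^ k := mul_one _
end

section
/- Let q ∈ (-1,0), ρ := |q|, and s ∈ ℕ, s ≥ 1. Then for ρ sufficiently small, θ(q, -ρ^{-4s+1}) < 0. -/
/-- For `ρ = |q|` sufficiently small, `θ(q, -ρ^{-(4s-1)}) < 0`. -/
theorem thetaR_neg_at_odd_power (s : ℕ) (hs : 1 ≤ s) :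
    ∃ ρ₀ > (0 : ℝ), ∀ q : ℝ, q ∈ Set.Ioo (-1 : ℝ) 0 → |q| < ρ₀ →
      thetaR q (-(|q| ^ (4 * s - 1))⁻¹) < 0 := by
  obtain ⟨t, rfl⟩ : ∃ t, s = t + 1 := ⟨s - 1, by omega⟩
  refine ⟨1/2, by norm_num, ?_⟩
  rintro q ⟨hq1, hq0⟩ hq2
  set ρ : ℝ := |q| with hρdef
  have hρq : q = -ρ := by rw [hρdef, abs_of_neg hq0]; ring
  have hρ0 : 0 < ρ := abs_pos.mpr (ne_of_lt hq0)
  have hρ2 : ρ < 1/2 := hq2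
  have hρ1 : ρ < 1 := by linarith
  set x : ℝ := -(ρ ^ (4 * (t + 1) - 1))⁻¹ with hxdef
  have hx : x = -(ρ ^ (4 * t + 3))⁻¹ := by
    rw [hxdef, show 4 * (t + 1) - 1 = 4 * t + 3 by omega]
  set m : ℕ := 4 * t + 2 with hmdef
  set a : ℕ → ℝ := fun j => q ^ (j * (j + 1) / 2) * x ^ j with hadef
  set E : ℤ := -(8 * (t : ℤ) ^ 2 + 10 * t + 3) with hEdef
  set e : ℕ → ℤ := fun j => ((j * (j + 1) / 2 : ℕ) : ℤ) - (4 * t + 3) * (j : ℤ) with hedef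
  -- cast of triangular numbers
  have hT : ∀ j : ℕ, 2 * ((j * (j + 1) / 2 : ℕ) : ℤ) = (j : ℤ) * (j + 1) := by
    intro j
    obtain ⟨c, hc⟩ := (even_iff_two_dvd.mp (Nat.even_mul_succ_self j))
    rw [hc, Nat.mul_div_cancel_left c (by norm_num)]
    exact_mod_cast hc.symm
  have he2 : ∀ j : ℕ, 2 * e j = (j : ℤ) * (j + 1) - 2 * (4 * t + 3) * j := by
    intro j
    simp only [hedef]
    rw [mul_sub, hT j]
    ring
  have hxabs : |x| = (ρ ^ (4 * t + 3))⁻¹ := by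
    rw [hx, abs_neg, abs_inv, abs_pow, abs_of_pos hρ0]
  -- absolute value of terms
  have habs : ∀ j : ℕ, |a j| = ρ ^ (e j) := by
    intro j
    have h1 : |a j| = ρ ^ (j * (j + 1) / 2) * ((ρ ^ (4 * t + 3))⁻¹) ^ j := by
      simp only [hadef]
      rw [abs_mul, abs_pow, abs_pow, hxabs, ← hρdef]
    rw [h1, ← zpow_natCast ρ (j * (j + 1) / 2), ← zpow_natCast ρ (4 * t + 3),
      ← zpow_neg, ← zpow_natCast (ρ ^ (-((4 * t + 3 : ℕ) : ℤ))) j, ← zpow_mul,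
      ← zpow_add₀ (ne_of_gt hρ0)]
    congr 1
  -- exponent values/inequalities
  have hem : e m = E := by
    have h := he2 m
    simp only [hmdef, hEdef] at h ⊢
    push_cast at h
    nlinarith [h]
  have hem1 : e (m + 1) = E := by
    have h := he2 (m + 1)
    simp only [hmdef, hEdef] at h ⊢
    push_cast at h
    nlinarith [h]
  have hetail : ∀ i : ℕ, E + ((i : ℤ) + 1) ≤ e (i + (m + 2)) := by
    intro i
    have h := he2 (i + (m + 2))
    simp only [hmdef, hEdef] at h ⊢
    push_cast at h
    nlinarith [h, mul_nonneg (Int.natCast_nonneg i) (Int.natCast_nonneg i)]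
  have hefront : ∀ j : ℕ, j < m → E + ((m : ℤ) - j) ≤ e j := by
    intro j hj
    have h := he2 j
    have hj' : (j : ℤ) ≤ 4 * t + 1 := by
      have hj'' : j ≤ 4 * t + 1 := by omega
      exact_mod_cast hj''
    simp only [hmdef, hEdef] at h ⊢
    push_cast at h ⊢
    nlinarith [h, mul_nonneg (by linarith : (0:ℤ) ≤ 4 * (t:ℤ) + 2 - j)
      (by linarith : (0:ℤ) ≤ 4 * (t:ℤ) + 1 - j)]
  -- signs of terms
  have hsign : ∀ j : ℕ, Odd (j * (j + 1) / 2 + j) → a j = -|a j| := by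
    intro j hodd
    have h1 : a j = (-1 : ℝ) ^ (j * (j + 1) / 2 + j) *
        (ρ ^ (j * (j + 1) / 2) * ((ρ ^ (4 * t + 3))⁻¹) ^ j) := by
      simp only [hadef]
      rw [hρq, hx, neg_pow, neg_pow, pow_add]
      ring
    have h2 : |a j| = ρ ^ (j * (j + 1) / 2) * ((ρ ^ (4 * t + 3))⁻¹) ^ j := by
      simp only [hadef]
      rw [abs_mul, abs_pow, abs_pow, hxabs, ← hρdef]
    rw [h2, h1, hodd.neg_one_pow, neg_one_mul]
  have hTm : m * (m + 1) / 2 = (2 * t + 1) * (4 * t + 3) := by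
    rw [hmdef, show (4*t+2)*(4*t+2+1) = 2*((2*t+1)*(4*t+3)) by ring,
      Nat.mul_div_cancel_left _ (by norm_num)]
  have hTm1 : (m + 1) * (m + 1 + 1) / 2 = (2 * t + 2) * (4 * t + 3) := by
    rw [hmdef, show (4*t+2+1)*(4*t+2+1+1) = 2*((2*t+2)*(4*t+3)) by ring,
      Nat.mul_div_cancel_left _ (by norm_num)]
  have ham : a m = -ρ ^ E := by
    rw [← hem, ← habs]
    apply hsign
    rw [hTm, hmdef]
    exact ⟨4*t^2 + 7*t + 2, by ring⟩
  have ham1 : a (m + 1) = -ρ ^ E := by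
    rw [← hem1, ← habs]
    apply hsign
    rw [hTm1, hmdef]
    exact ⟨4*t^2 + 9*t + 4, by ring⟩
  -- the positive constant c = ρ^E
  set c : ℝ := ρ ^ E with hcdef
  have hc0 : 0 < c := zpow_pos hρ0 _
  -- geometric bounds
  have hgeo : Summable (fun i : ℕ => c * ρ * ρ ^ i) :=
    (summable_geometric_of_lt_one hρ0.le hρ1).mul_left _
  have hbound : ∀ i : ℕ, |a (i + (m + 2))| ≤ c * ρ * ρ ^ i := by
    intro i
    rw [habs]
    have h1 : ρ ^ (e (i + (m + 2))) ≤ ρ ^ (E + ((i : ℤ) + 1)) :=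
      zpow_le_zpow_right_of_le_one₀ hρ0 hρ1.le (hetail i)
    refine h1.trans_eq ?_
    rw [zpow_add₀ (ne_of_gt hρ0), hcdef,
      show ((i : ℤ) + 1) = (((i + 1 : ℕ)) : ℤ) by push_cast; ring, zpow_natCast,
      pow_succ]
    ring
  have htail : Summable (fun i : ℕ => |a (i + (m + 2))|) :=
    Summable.of_nonneg_of_le (fun i => abs_nonneg _) hbound hgeo
  have htail' : Summable (fun i : ℕ => a (i + (m + 2))) := htail.of_abs
  have hsum : Summable a := (summable_nat_add_iff (m + 2)).mp htail'
  -- geometric tsum value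
  have hgeoval : ∑' i : ℕ, c * ρ * ρ ^ i = c * ρ * (1 - ρ)⁻¹ := by
    rw [tsum_mul_left, tsum_geometric_of_lt_one hρ0.le hρ1]
  -- tail bound
  have htailbd : ∑' i : ℕ, a (i + (m + 2)) ≤ c * ρ * (1 - ρ)⁻¹ := by
    calc ∑' i : ℕ, a (i + (m + 2)) ≤ ∑' i : ℕ, |a (i + (m + 2))| :=
          Summable.tsum_le_tsum (fun i => le_abs_self _) htail' htail
      _ ≤ ∑' i : ℕ, c * ρ * ρ ^ i := Summable.tsum_le_tsum hbound htail hgeo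
      _ = c * ρ * (1 - ρ)⁻¹ := hgeoval
  -- front bound
  have hfrontbd : ∑ j ∈ Finset.range m, a j ≤ c * ρ * (1 - ρ)⁻¹ := by
    have h1 : ∀ j ∈ Finset.range m, a j ≤ c * ρ ^ (m - j) := by
      intro j hj
      rw [Finset.mem_range] at hj
      refine (le_abs_self _).trans ?_
      rw [habs]
      have h2 : ρ ^ (e j) ≤ ρ ^ (E + ((m : ℤ) - j)) :=
        zpow_le_zpow_right_of_le_one₀ hρ0 hρ1.le (hefront j hj)
      refine h2.trans_eq ?_
      rw [zpow_add₀ (ne_of_gt hρ0), hcdef,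
        show ((m : ℤ) - j) = ((m - j : ℕ) : ℤ) by
          have hjm : j ≤ m := le_of_lt hj
          push_cast [hjm]; ring,
        zpow_natCast]
    refine (Finset.sum_le_sum h1).trans ?_
    have hgeo' : Summable (fun j : ℕ => c * ρ ^ (j + 1)) :=
      hgeo.congr fun j => by rw [pow_succ]; ring
    have h3 : ∑ j ∈ Finset.range m, c * ρ ^ (m - j)
        = ∑ j ∈ Finset.range m, c * ρ ^ (j + 1) := by
      rw [← Finset.sum_range_reflect (fun j => c * ρ ^ (j + 1)) m]
      refine Finset.sum_congr rfl fun j hj => ?_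
      rw [Finset.mem_range] at hj
      have hjm : m - 1 - j + 1 = m - j := by omega
      rw [hjm]
    rw [h3]
    have h4 : ∑ j ∈ Finset.range m, c * ρ ^ (j + 1) ≤ ∑' j : ℕ, c * ρ ^ (j + 1) :=
      Summable.sum_le_tsum _ (fun j _ => by positivity) hgeo'
    refine h4.trans_eq ?_
    rw [← hgeoval]
    exact tsum_congr fun j => by rw [pow_succ]; ring
  -- assemble
  have hθ : thetaR q x = ∑ j ∈ Finset.range m, a j + a m + a (m + 1)
      + ∑' i : ℕ, a (i + (m + 2)) := by
    have h0 : thetaR q x = ∑' j : ℕ, a j := rfl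
    rw [h0, ← Summable.sum_add_tsum_nat_add (m + 2) hsum,
      show m + 2 = (m + 1) + 1 from rfl, Finset.sum_range_succ, Finset.sum_range_succ]
  have hlt : c * ρ * (1 - ρ)⁻¹ < c := by
    have h1 : (0:ℝ) < 1 - ρ := by linarith
    have h2 : ρ * (1 - ρ)⁻¹ < 1 := by
      rw [← div_eq_mul_inv, div_lt_one h1]; linarith
    calc c * ρ * (1 - ρ)⁻¹ = c * (ρ * (1 - ρ)⁻¹) := by ring
      _ < c * 1 := mul_lt_mul_of_pos_left h2 hc0
      _ = c := mul_one c
  rw [hθ, ham, ham1]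
  have : -(ρ:ℝ) ^ E = -c := by rw [hcdef]
  rw [this]
  linarith [hfrontbd, htailbd, hlt, hc0]
end

section
/- Let q ∈ (-1,0), ρ := |q|, and s ∈ ℕ, s ≥ 1. Then for ρ sufficiently small, θ(q, -ρ^{-4s-1}) > 0 and θ(q, ρ^{-4s}) > 0 and θ(q, ρ^{-4s+2}) < 0. -/
private def tri (n : ℕ) : ℕ := n * (n + 1) / 2

private lemma two_tri (n : ℕ) : 2 * tri n = n * (n + 1) :=
  Nat.mul_div_cancel' ((Nat.even_mul_succ_self n).two_dvd)

private lemma npow_tri_even (n k : ℕ) (h : n * (n + 1) = 2 * (2 * k)) :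
    (-1:ℝ) ^ (n * (n + 1) / 2) = 1 := by
  rw [h, Nat.mul_div_cancel_left _ (by norm_num : 0 < 2)]
  exact Even.neg_one_pow (even_two_mul k)

private lemma npow_tri_odd (n k : ℕ) (h : n * (n + 1) = 2 * (2 * k + 1)) :
    (-1:ℝ) ^ (n * (n + 1) / 2) = -1 := by
  rw [h, Nat.mul_div_cancel_left _ (by norm_num : 0 < 2)]
  exact Odd.neg_one_pow ⟨k, by ring⟩

set_option maxHeartbeats 2000000 in
private lemma key_lemma (q : ℝ) (hq1 : -1 < q) (hq0 : q < 0) (m : ℕ) (η σ₀ : ℝ)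
    (hη : η = 1 ∨ η = -1)
    (hm : (-1:ℝ) ^ (m * (m + 1) / 2) * η ^ m = σ₀)
    (hm1 : (-1:ℝ) ^ ((m + 1) * (m + 1 + 1) / 2) * η ^ (m + 1) = σ₀)
    (hsmall : ((2 * m + 4 : ℕ) : ℝ) * |q| < 1) :
    0 < σ₀ * thetaR q (η * (|q| ^ (m + 1))⁻¹) := by
  set ρ : ℝ := |q| with hρdef
  have hρ0 : 0 < ρ := abs_pos.mpr (ne_of_lt hq0)
  have hρne : ρ ≠ 0 := ne_of_gt hρ0
  have hqρ : q = -ρ := by rw [hρdef, abs_of_neg hq0]; ring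
  have hρ4 : ρ < 1/4 := by
    have hm0 : (0:ℝ) ≤ (m:ℝ) := Nat.cast_nonneg m
    have h4 : (4:ℝ) ≤ ((2 * m + 4 : ℕ) : ℝ) := by push_cast; linarith
    nlinarith [hρ0.le]
  have hρ1 : ρ < 1 := by linarith
  have hT : ∀ n : ℕ, 2 * (tri n : ℤ) = n * (n + 1) := by
    intro n; exact_mod_cast two_tri n
  set w : ℕ → ℤ := fun j => (tri j : ℤ) + tri m - (m + 1) * j with hwdef
  have hid : ∀ j : ℕ, 2 * w j = ((j:ℤ) - m) * ((j:ℤ) - m - 1) := by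
    intro j
    have h1 := hT j; have h2 := hT m
    simp only [hwdef]
    push_cast at h1 h2 ⊢
    linear_combination h1 + h2
  have hw0 : w m = 0 := by
    have h := hid m
    rw [sub_self, zero_mul] at h
    linarith
  have hw1 : w (m + 1) = 0 := by
    have h1 := hT (m+1); have h2 := hT m
    simp only [hwdef]
    push_cast at h1 h2 ⊢
    nlinarith [h1, h2]
  have hwnn : ∀ j, 0 ≤ w j := by
    intro j
    rcases le_or_gt (j:ℤ) m with h | h
    · nlinarith [hid j, mul_nonneg (by linarith : (0:ℤ) ≤ (m:ℤ) - j)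
        (by linarith : (0:ℤ) ≤ (m:ℤ) + 1 - j)]
    · have h' : (m:ℤ) + 1 ≤ j := h
      nlinarith [hid j, mul_nonneg (by linarith : (0:ℤ) ≤ (j:ℤ) - m)
        (by linarith : (0:ℤ) ≤ (j:ℤ) - m - 1)]
  have hwge : ∀ j, j ≠ m → j ≠ m + 1 → ((j - (m+2) : ℕ) : ℤ) + 1 ≤ w j := by
    intro j hjm hjm1
    rcases lt_or_ge j m with h | h
    · rw [show j - (m+2) = 0 from by omega]
      have hji : (j:ℤ) + 1 ≤ m := by exact_mod_cast h
      have hp : (1:ℤ) * 2 ≤ ((m:ℤ) - j) * ((m:ℤ) + 1 - j) :=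
        mul_le_mul (by linarith) (by linarith) (by norm_num) (by linarith)
      have := hid j
      push_cast
      nlinarith
    · have h2 : m + 2 ≤ j := by omega
      have hc : ((j - (m+2) : ℕ) : ℤ) = (j:ℤ) - m - 2 := by
        rw [Nat.cast_sub h2]; push_cast; ring
      rw [hc]
      have hji : (m:ℤ) + 2 ≤ j := by exact_mod_cast h2
      nlinarith [hid j, mul_nonneg (by linarith : (0:ℤ) ≤ (j:ℤ) - m - 2)
        (by linarith : (0:ℤ) ≤ (j:ℤ) - m - 1)]
  have hwge2 : ∀ j, ((j - (m+2) : ℕ) : ℤ) ≤ w j := by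
    intro j
    by_cases h1 : j = m
    · subst h1; rw [show j - (j+2) = 0 from by omega, hw0]; simp
    by_cases h2 : j = m + 1
    · subst h2; rw [show m + 1 - (m+2) = 0 from by omega, hw1]; simp
    · linarith [hwge j h1 h2]
  have hηabs : |η| = 1 := by rcases hη with h | h <;> simp [h]
  have hσabs : |σ₀| = 1 := by
    rw [← hm, abs_mul, abs_pow, abs_pow, abs_neg, abs_one, one_pow, hηabs, one_pow, mul_one]
  have hσ0 : σ₀ * σ₀ = 1 := by rw [← abs_mul_abs_self, hσabs]; norm_num
  set ε : ℕ → ℝ := fun j => (-1:ℝ) ^ (tri j) * η ^ j with hεdef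
  have hεabs : ∀ j, |ε j| = 1 := by
    intro j
    simp only [hεdef]
    rw [abs_mul, abs_pow, abs_pow, abs_neg, abs_one, one_pow, hηabs, one_pow, mul_one]
  have hεm : ε m = σ₀ := hm
  have hεm1 : ε (m + 1) = σ₀ := hm1
  set c : ℕ → ℝ := fun j => σ₀ * ε j * ρ ^ (w j) with hcdef
  -- pointwise identity
  have hpt : ∀ j : ℕ, q ^ (tri j) * (η * (ρ ^ (m+1))⁻¹) ^ j
      = (σ₀ * (ρ ^ ((tri m : ℤ)))⁻¹) * c j := by
    intro j
    have e1 : q ^ (tri j) = (-1:ℝ) ^ (tri j) * ρ ^ (tri j) := by rw [hqρ, neg_pow]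
    have e2 : ((ρ ^ (m+1))⁻¹ : ℝ) ^ j = (ρ ^ ((m+1) * j))⁻¹ := by
      rw [inv_pow, pow_mul]
    have e3 : ρ ^ (tri j) * (ρ ^ ((m+1)*j))⁻¹ = ρ ^ (w j) * (ρ ^ ((tri m : ℤ)))⁻¹ := by
      rw [← zpow_natCast ρ (tri j), ← zpow_natCast ρ ((m+1)*j),
        ← zpow_neg, ← zpow_neg, ← zpow_add₀ hρne, ← zpow_add₀ hρne]
      congr 1
      simp only [hwdef]
      push_cast
      ring
    rw [mul_pow, e1, e2,
      show (-1:ℝ) ^ (tri j) * ρ ^ (tri j) * (η ^ j * (ρ ^ ((m+1)*j))⁻¹)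
        = ((-1:ℝ) ^ (tri j) * η ^ j) * (ρ ^ (tri j) * (ρ ^ ((m+1)*j))⁻¹) from by ring, e3]
    simp only [hcdef, hεdef]
    linear_combination (-(ρ ^ (w j) * (ρ ^ ((tri m : ℤ)))⁻¹ *
      ((-1:ℝ) ^ (tri j) * η ^ j))) * hσ0
  have hθ : thetaR q (η * (ρ ^ (m+1))⁻¹) = (σ₀ * (ρ ^ ((tri m : ℤ)))⁻¹) * ∑' j, c j := by
    have h0 : thetaR q (η * (ρ ^ (m+1))⁻¹) = ∑' j : ℕ, q ^ (tri j) * (η * (ρ ^ (m+1))⁻¹) ^ j := rfl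
    rw [h0, ← tsum_mul_left]
    exact tsum_congr hpt
  -- bounds
  have habs : ∀ j, |c j| = ρ ^ (w j) := by
    intro j
    simp only [hcdef]
    rw [abs_mul, abs_mul, hσabs, hεabs, abs_of_pos (zpow_pos hρ0 _), one_mul, one_mul]
  have hble : ∀ j, |c j| ≤ ρ ^ (j - (m+2)) := by
    intro j
    rw [habs j, ← zpow_natCast ρ (j - (m+2))]
    exact zpow_le_zpow_right_of_le_one₀ hρ0 hρ1.le (hwge2 j)
  have hgsum : Summable (fun j : ℕ => ρ ^ (j - (m+2))) := by
    refine (summable_nat_add_iff (m+2)).mp ?_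
    have hg : Summable (fun n : ℕ => ρ ^ n) := summable_geometric_of_lt_one hρ0.le hρ1
    simpa [Nat.add_sub_cancel] using hg
  have hcabs : Summable (fun j => |c j|) :=
    Summable.of_nonneg_of_le (fun j => abs_nonneg _) hble hgsum
  have hcsum : Summable c := hcabs.of_abs
  have hcm : c m = 1 := by
    simp only [hcdef]
    rw [hεm, hw0, zpow_zero, mul_one, hσ0]
  have hcm1 : c (m+1) = 1 := by
    simp only [hcdef]
    rw [hεm1, hw1, zpow_zero, mul_one, hσ0]
  have hsplit := Summable.sum_add_tsum_compl (s := ({m, m+1} : Finset ℕ)) hcsum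
  have hpair : ∑ i ∈ ({m, m+1} : Finset ℕ), c i = 2 := by
    rw [Finset.sum_pair (by omega : m ≠ m+1), hcm, hcm1]; norm_num
  set R : ℝ := ∑' (x : ↑((↑({m, m+1} : Finset ℕ) : Set ℕ))ᶜ), c ↑x with hRdef
  set b : ℕ → ℝ := fun j => if j = m ∨ j = m+1 then 0 else ρ * ρ ^ (j - (m+2)) with hbdef
  have hbnn : ∀ j, 0 ≤ b j := by
    intro j
    simp only [hbdef]
    split
    · exact le_refl 0
    · positivity
  have hhsum : Summable (fun j : ℕ => ρ * ρ ^ (j - (m+2))) := hgsum.mul_left ρ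
  have hbsum : Summable b := by
    refine Summable.of_nonneg_of_le hbnn (fun j => ?_) hhsum
    simp only [hbdef]
    split
    · positivity
    · exact le_refl _
  have hRle : |R| ≤ ∑' j, b j := by
    have habs' : Summable (fun x : ↑((↑({m, m+1} : Finset ℕ) : Set ℕ))ᶜ => |c ↑x|) :=
      hcabs.subtype _
    have hn : Summable (fun x : ↑((↑({m, m+1} : Finset ℕ) : Set ℕ))ᶜ => ‖c ↑x‖) := by
      simpa [Real.norm_eq_abs] using habs'
    have h1 : |R| ≤ ∑' (x : ↑((↑({m, m+1} : Finset ℕ) : Set ℕ))ᶜ), |c ↑x| := by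
      simpa [hRdef, Real.norm_eq_abs] using norm_tsum_le_tsum_norm hn
    refine h1.trans ?_
    refine Summable.tsum_le_tsum_of_inj Subtype.val Subtype.val_injective
      (fun j _ => hbnn j) (fun x => ?_) habs' hbsum
    obtain ⟨j, hj⟩ := x
    have hj' : j ∉ ({m, m+1} : Finset ℕ) := by
      simpa using hj
    have hjm : j ≠ m := by intro h; apply hj'; simp [h]
    have hjm1 : j ≠ m + 1 := by intro h; apply hj'; simp [h]
    simp only [hbdef, hjm, hjm1, or_self, if_false]
    rw [habs j]
    have hwj := hwge j hjm hjm1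
    calc ρ ^ (w j) ≤ ρ ^ (((j - (m+2) : ℕ) : ℤ) + 1) :=
          zpow_le_zpow_right_of_le_one₀ hρ0 hρ1.le hwj
      _ = ρ * ρ ^ (j - (m+2)) := by
          rw [show (((j - (m+2) : ℕ) : ℤ) + 1) = (((j - (m+2) + 1 : ℕ) : ℤ)) from by push_cast; ring,
            zpow_natCast, pow_succ]
          ring
  have hhval : ∑' j : ℕ, (ρ * ρ ^ (j - (m+2))) = (m+2) * ρ + ρ * (1-ρ)⁻¹ := by
    rw [← Summable.sum_add_tsum_nat_add (m+2) hhsum]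
    congr 1
    · have hc : ∀ i ∈ Finset.range (m+2), ρ * ρ ^ (i - (m+2)) = ρ := by
        intro i hi
        rw [Finset.mem_range] at hi
        rw [show i - (m+2) = 0 from by omega, pow_zero, mul_one]
      rw [Finset.sum_congr rfl hc, Finset.sum_const, Finset.card_range, nsmul_eq_mul]
      push_cast; ring
    · have hc : ∀ i : ℕ, ρ * ρ ^ ((i + (m+2)) - (m+2)) = ρ * ρ ^ i := by
        intro i; rw [Nat.add_sub_cancel]
      rw [tsum_congr hc, tsum_mul_left, tsum_geometric_of_lt_one hρ0.le hρ1]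
  have hbval : ∑' j, b j ≤ (m+2) * ρ + ρ * (1-ρ)⁻¹ := by
    rw [← hhval]
    refine Summable.tsum_le_tsum (fun j => ?_) hbsum hhsum
    simp only [hbdef]
    split
    · positivity
    · exact le_refl _
  have hRbound : |R| ≤ ((m:ℝ)+2) * ρ + ρ * (1-ρ)⁻¹ := hRle.trans hbval
  have hnum : ((m:ℝ)+2) * ρ + ρ * (1-ρ)⁻¹ < 2 := by
    have hs' : ((m:ℝ)+2) * ρ < 1/2 := by
      push_cast at hsmall
      nlinarith [hsmall]
    have h2 : ρ * (1-ρ)⁻¹ ≤ 1 := by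
      rw [← div_eq_mul_inv, div_le_one (by linarith : (0:ℝ) < 1 - ρ)]
      linarith
    linarith
  have hpos : 0 < ∑' j, c j := by
    have h := (abs_le.mp hRbound).1
    have hsum_eq : ∑' j, c j = 2 + R := by
      rw [← hsplit, hpair]
    rw [hsum_eq]
    linarith
  have hA : 0 < (ρ ^ ((tri m : ℤ)))⁻¹ := inv_pos.mpr (zpow_pos hρ0 _)
  have : σ₀ * thetaR q (η * (ρ ^ (m+1))⁻¹)
      = (ρ ^ ((tri m : ℤ)))⁻¹ * ∑' j, c j := by
    rw [hθ]
    linear_combination ((ρ ^ ((tri m : ℤ)))⁻¹ * ∑' j, c j) * hσ0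
  rw [this]
  exact mul_pos hA hpos

/-- For `ρ = |q|` sufficiently small: `θ(q, -ρ^{-(4s+1)}) > 0`, `θ(q, ρ^{-4s}) > 0` and
`θ(q, ρ^{-(4s-2)}) < 0`. -/
theorem thetaR_signs_at_powers (s : ℕ) (hs : 1 ≤ s) :
    ∃ ρ₀ > (0 : ℝ), ∀ q : ℝ, q ∈ Set.Ioo (-1 : ℝ) 0 → |q| < ρ₀ →
      0 < thetaR q (-(|q| ^ (4 * s + 1))⁻¹) ∧
      0 < thetaR q ((|q| ^ (4 * s))⁻¹) ∧
      thetaR q ((|q| ^ (4 * s - 2))⁻¹) < 0 := by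
  obtain ⟨t, rfl⟩ : ∃ t, s = t + 1 := ⟨s - 1, by omega⟩
  refine ⟨(8*(t:ℝ)+14)⁻¹, by positivity, ?_⟩
  rintro q ⟨hq1, hq0⟩ hqρ
  have h14 : (0:ℝ) < 8*(t:ℝ)+14 := by positivity
  have hq14 : (8*(t:ℝ)+14) * |q| < 1 := by
    have h := mul_lt_mul_of_pos_left hqρ h14
    rwa [mul_inv_cancel₀ (ne_of_gt h14)] at h
  have htq : (0:ℝ) ≤ (t:ℝ) * |q| := mul_nonneg (Nat.cast_nonneg t) (abs_nonneg q)
  have haq : (0:ℝ) ≤ |q| := abs_nonneg q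
  refine ⟨?_, ?_, ?_⟩
  · -- m = 4t+4, η = -1
    have h := key_lemma q hq1 hq0 (4*t+4) (-1) 1 (Or.inr rfl) ?_ ?_ ?_
    · rw [show 4*(t+1)+1 = 4*t+4+1 from by ring]
      have h2 : (-1 : ℝ) * (|q| ^ (4*t+4+1))⁻¹ = -(|q| ^ (4*t+4+1))⁻¹ := by ring
      rw [h2, one_mul] at h
      exact h
    · rw [npow_tri_even (4*t+4) ((t+1)*(4*t+5)) (by ring),
        Even.neg_one_pow ⟨2*t+2, by ring⟩]
      norm_num
    · rw [npow_tri_odd (4*t+4+1) (4*t^2+11*t+7) (by ring),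
        Odd.neg_one_pow ⟨2*t+2, by ring⟩]
      norm_num
    · push_cast
      nlinarith [hq14, htq, haq]
  · -- m = 4t+3, η = 1
    have h := key_lemma q hq1 hq0 (4*t+3) 1 1 (Or.inl rfl) ?_ ?_ ?_
    · rw [show 4*(t+1) = 4*t+3+1 from by ring]
      rw [one_mul, one_mul] at h
      exact h
    · rw [npow_tri_even (4*t+3) ((4*t+3)*(t+1)) (by ring), one_pow]
      norm_num
    · rw [npow_tri_even (4*t+3+1) ((t+1)*(4*t+5)) (by ring), one_pow]
      norm_num
    · push_cast
      nlinarith [hq14, htq, haq]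
  · -- m = 4t+1, η = 1, σ₀ = -1
    have h := key_lemma q hq1 hq0 (4*t+1) 1 (-1) (Or.inl rfl) ?_ ?_ ?_
    · rw [show 4*(t+1)-2 = 4*t+1+1 from by omega]
      rw [one_mul] at h
      linarith
    · rw [npow_tri_odd (4*t+1) (4*t^2+3*t) (by ring), one_pow]
      norm_num
    · rw [npow_tri_odd (4*t+1+1) (4*t^2+5*t+1) (by ring), one_pow]
      norm_num
    · push_cast
      nlinarith [hq14, htq, haq]
end

section
/- Let q ∈ (-1,0) with ρ := |q| sufficiently small, and s ≥ 1 an integer. Then θ(q,·) has at least one real zero in each of the intervals (-ρ^{-4s-1}, -ρ^{-4s+1}), (-ρ^{-4s-3}, -ρ^{-4s-1}), (ρ^{-4s+2}, ρ^{-4s}), and (ρ^{-4s}, ρ^{-4s-2}). -/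
open Filter Finset Topology

lemma Nat.succ_mul_succ_add_one_div_two (j : ℕ) :
    (j + 1) * (j + 1 + 1) / 2 = j * (j + 1) / 2 + (j + 1) := by
  have h := Nat.triangle_succ (j + 1)
  simp only [Nat.add_sub_cancel] at h
  rw [mul_comm, h, mul_comm]

lemma Nat.even_mul_pred_div_two_iff (k : ℕ) :
    Even (k * (k - 1) / 2) ↔ k % 4 = 0 ∨ k % 4 = 1 := by
  rw [Nat.even_div, Nat.mul_mod]
  have : k % 4 < 4 := Nat.mod_lt k (by norm_num)
  interval_cases h : k % 4
  · simp
  · have : (k - 1) % 4 = 0 := by omega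
    simp [this]
  · have : (k - 1) % 4 = 1 := by omega
    simp [this]
  · have : (k - 1) % 4 = 2 := by omega
    simp [this]

lemma thetaR_term_succ (q x : ℝ) (j : ℕ) :
    q ^ ((j + 1) * (j + 1 + 1) / 2) * x ^ (j + 1) =
      q * x * (q ^ (j * (j + 1) / 2) * (q * x) ^ j) := by
  rw [Nat.succ_mul_succ_add_one_div_two, pow_add, mul_pow]
  ring

section

variable {q : ℝ}

lemma summable_thetaR_terms (hq : |q| < 1) (x : ℝ) :
    Summable fun j : ℕ ↦ q ^ (j * (j + 1) / 2) * x ^ j := by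
  refine summable_of_ratio_norm_eventually_le (r := 1 / 2) (by norm_num) ?_
  have hlim : Tendsto (fun j : ℕ ↦ |q| ^ (j + 1) * |x|) atTop (𝓝 0) := by
    simpa only [Function.comp_def, zero_mul] using
      ((tendsto_pow_atTop_nhds_zero_of_lt_one (abs_nonneg q) hq).comp
        (tendsto_add_atTop_nat 1)).mul_const |x|
  filter_upwards [hlim.eventually (ge_mem_nhds one_half_pos)] with j hj
  have hratio : q * x * (q ^ (j * (j + 1) / 2) * (q * x) ^ j) =
      q ^ (j + 1) * x * (q ^ (j * (j + 1) / 2) * x ^ j) := by ring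
  rw [thetaR_term_succ, hratio, norm_mul, norm_mul, norm_pow, Real.norm_eq_abs, Real.norm_eq_abs]
  exact mul_le_mul_of_nonneg_right hj (norm_nonneg _)

lemma continuous_thetaR (hq : |q| < 1) : Continuous (thetaR q) := by
  refine continuous_iff_continuousAt.2 fun x ↦ ?_
  have hR : 0 ≤ |x| + 1 := by positivity
  have hcont : ContinuousOn (thetaR q) (Set.Icc (-(|x| + 1)) (|x| + 1)) := by
    refine continuousOn_tsum (fun j ↦ by fun_prop) (summable_thetaR_terms hq (|x| + 1)).norm ?_
    intro j y hy
    simp only [norm_mul, norm_pow, Real.norm_eq_abs, abs_of_nonneg hR]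
    gcongr
    exact abs_le.2 hy
  exact hcont.continuousAt
    (Icc_mem_nhds (by linarith [neg_abs_le x]) (by linarith [le_abs_self x]))

lemma thetaR_eq_one_add (hq : |q| < 1) (x : ℝ) : thetaR q x = 1 + q * x * thetaR q (q * x) := by
  rw [thetaR, (summable_thetaR_terms hq x).tsum_eq_zero_add, thetaR, ← tsum_mul_left]
  simp only [thetaR_term_succ]
  simp

lemma pow_mul_thetaR_inv_pow (hq : |q| < 1) (hq0 : q ≠ 0) (k : ℕ) :
    q ^ (k * (k - 1) / 2) * thetaR q (q ^ k)⁻¹ =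
      thetaR q 1 + ∑ j ∈ range k, q ^ (j * (j + 1) / 2) := by
  induction k with
  | zero => simp
  | succ k ih =>
    have hx : q * (q ^ (k + 1))⁻¹ = (q ^ k)⁻¹ := by field_simp; ring
    have hT : k * (k + 1) / 2 = k * (k - 1) / 2 + k := by
      rw [← Nat.triangle_succ, Nat.add_sub_cancel, mul_comm]
    rw [thetaR_eq_one_add hq, hx, sum_range_succ, ← add_assoc, ← ih, Nat.triangle_succ, hT,
      pow_add]
    field_simp
    ring

lemma neg_abs_pow_le_pow_triangle (hq : |q| ≤ 1) (j : ℕ) : -|q| ^ j ≤ q ^ (j * (j + 1) / 2) := by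
  have hj : j ≤ j * (j + 1) / 2 :=
    (Nat.le_div_iff_mul_le two_pos).2 (by rcases j with _ | j <;> nlinarith)
  calc -|q| ^ j ≤ -|q| ^ (j * (j + 1) / 2) :=
        neg_le_neg (pow_le_pow_of_le_one (abs_nonneg q) hq hj)
    _ = -|q ^ (j * (j + 1) / 2)| := by rw [abs_pow]
    _ ≤ _ := neg_abs_le _

lemma one_sub_div_le_sum_range_pow_triangle (hq : |q| < 1) (n : ℕ) :
    1 - |q| / (1 - |q|) ≤ ∑ j ∈ range (n + 1), q ^ (j * (j + 1) / 2) := by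
  rw [range_eq_Ico, sum_eq_sum_Ico_succ_bot n.succ_pos]
  have hgeom := geom_sum_Ico_le_of_lt_one (m := 1) (n := n + 1) (abs_nonneg q) hq
  have hterms : ∑ j ∈ Ico 1 (n + 1), -|q| ^ j ≤ ∑ j ∈ Ico 1 (n + 1), q ^ (j * (j + 1) / 2) :=
    sum_le_sum fun j _ ↦ neg_abs_pow_le_pow_triangle hq.le j
  rw [pow_one] at hgeom
  rw [sum_neg_distrib] at hterms
  norm_num
  linarith

lemma thetaR_one_add_sum_pos (hq : |q| < 1 / 2) (k : ℕ) :
    0 < thetaR q 1 + ∑ j ∈ range k, q ^ (j * (j + 1) / 2) := by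
  have hq1 : |q| < 1 := by linarith
  have hc : 0 < 1 - |q| / (1 - |q|) := by
    rw [sub_pos, div_lt_one (by linarith)]
    linarith
  have hθ : 1 - |q| / (1 - |q|) ≤ thetaR q 1 := by
    have hsum : HasSum (fun j : ℕ ↦ q ^ (j * (j + 1) / 2)) (thetaR q 1) := by
      simpa [thetaR] using (summable_thetaR_terms hq1 1).hasSum
    exact ge_of_tendsto' (hsum.tendsto_sum_nat.comp (tendsto_add_atTop_nat 1))
      fun n ↦ one_sub_div_le_sum_range_pow_triangle hq1 n
  have hpartial : 0 ≤ ∑ j ∈ range k, q ^ (j * (j + 1) / 2) := by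
    cases k with
    | zero => simp
    | succ n => linarith [one_sub_div_le_sum_range_pow_triangle hq1 n]
  linarith

lemma pow_mul_thetaR_inv_pow_pos (hq : |q| < 1 / 2) (hq0 : q ≠ 0) (k : ℕ) :
    0 < q ^ (k * (k - 1) / 2) * thetaR q (q ^ k)⁻¹ :=
  pow_mul_thetaR_inv_pow (by linarith) hq0 k ▸ thetaR_one_add_sum_pos hq k

lemma thetaR_inv_pow_pos (hq : |q| < 1 / 2) (hq0 : q < 0) {k : ℕ}
    (hk : k % 4 = 0 ∨ k % 4 = 1) : 0 < thetaR q (q ^ k)⁻¹ :=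
  pos_of_mul_pos_right (pow_mul_thetaR_inv_pow_pos hq hq0.ne k)
    (((Nat.even_mul_pred_div_two_iff k).2 hk).pow_pos hq0.ne).le

lemma thetaR_inv_pow_neg (hq : |q| < 1 / 2) (hq0 : q < 0) {k : ℕ}
    (hk : k % 4 = 2 ∨ k % 4 = 3) : thetaR q (q ^ k)⁻¹ < 0 := by
  have hodd : Odd (k * (k - 1) / 2) := by
    rw [← Nat.not_even_iff_odd, Nat.even_mul_pred_div_two_iff]
    omega
  exact neg_of_mul_pos_right (pow_mul_thetaR_inv_pow_pos hq hq0.ne k) (hodd.pow_neg hq0).le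

end

/-- For `ρ = |q|` sufficiently small, `θ(q,·)` has a real zero in each of the intervals
`(-ρ^{-4s-1}, -ρ^{-4s+1})`, `(-ρ^{-4s-3}, -ρ^{-4s-1})`, `(ρ^{-4s+2}, ρ^{-4s})` and
`(ρ^{-4s}, ρ^{-4s-2})`. -/
theorem thetaR_zeros_in_intervals (s : ℕ) (hs : 1 ≤ s) :
    ∃ ρ₀ > (0 : ℝ), ∀ q : ℝ, q ∈ Set.Ioo (-1 : ℝ) 0 → |q| < ρ₀ →
      (∃ x ∈ Set.Ioo (-(|q| ^ (4 * s + 1))⁻¹) (-(|q| ^ (4 * s - 1))⁻¹), thetaR q x = 0) ∧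
      (∃ x ∈ Set.Ioo (-(|q| ^ (4 * s + 3))⁻¹) (-(|q| ^ (4 * s + 1))⁻¹), thetaR q x = 0) ∧
      (∃ x ∈ Set.Ioo ((|q| ^ (4 * s - 2))⁻¹) ((|q| ^ (4 * s))⁻¹), thetaR q x = 0) ∧
      (∃ x ∈ Set.Ioo ((|q| ^ (4 * s))⁻¹) ((|q| ^ (4 * s + 2))⁻¹), thetaR q x = 0) := by
  refine ⟨1 / 2, one_half_pos, fun q hq hq2 ↦ ?_⟩
  have hq0 : q < 0 := hq.2
  have hodd : ∀ k, Odd k → -(|q| ^ k)⁻¹ = (q ^ k)⁻¹ := fun k hk ↦ by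
    rw [abs_of_neg hq0, hk.neg_pow, inv_neg, neg_neg]
  have heven : ∀ k, Even k → (|q| ^ k)⁻¹ = (q ^ k)⁻¹ := fun k hk ↦ by rw [hk.pow_abs]
  have hmono : ∀ {m n : ℕ}, m ≤ n → (|q| ^ m)⁻¹ ≤ (|q| ^ n)⁻¹ := fun hmn ↦
    inv_anti₀ (pow_pos (abs_pos.2 hq0.ne) _) (pow_le_pow_of_le_one (abs_nonneg q) (by linarith) hmn)
  have hcont := continuous_thetaR (by linarith : |q| < 1)
  refine ⟨?_, ?_, ?_, ?_⟩
  · refine intermediate_value_Ioo' (neg_le_neg (hmono (by omega))) hcont.continuousOn ?_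
    rw [hodd (4 * s + 1) ⟨2 * s, by ring⟩, hodd (4 * s - 1) ⟨2 * s - 1, by omega⟩]
    exact ⟨thetaR_inv_pow_neg hq2 hq0 (by omega), thetaR_inv_pow_pos hq2 hq0 (by omega)⟩
  · refine intermediate_value_Ioo (neg_le_neg (hmono (by omega))) hcont.continuousOn ?_
    rw [hodd (4 * s + 3) ⟨2 * s + 1, by ring⟩, hodd (4 * s + 1) ⟨2 * s, by ring⟩]
    exact ⟨thetaR_inv_pow_neg hq2 hq0 (by omega), thetaR_inv_pow_pos hq2 hq0 (by omega)⟩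
  · refine intermediate_value_Ioo (hmono (by omega)) hcont.continuousOn ?_
    rw [heven (4 * s - 2) ⟨2 * s - 1, by omega⟩, heven (4 * s) ⟨2 * s, by ring⟩]
    exact ⟨thetaR_inv_pow_neg hq2 hq0 (by omega), thetaR_inv_pow_pos hq2 hq0 (by omega)⟩
  · refine intermediate_value_Ioo' (hmono (by omega)) hcont.continuousOn ?_
    rw [heven (4 * s) ⟨2 * s, by ring⟩, heven (4 * s + 2) ⟨2 * s + 1, by ring⟩]
    exact ⟨thetaR_inv_pow_neg hq2 hq0 (by omega), thetaR_inv_pow_pos hq2 hq0 (by omega)⟩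
end

section
/- Let q ∈ (0,1) and suppose x₀ < 0 satisfies θ(q, x₀) = 0. Define x_{s} := x₀/q^s for s ∈ ℕ. Then θ(q, x₁) = 1. Moreover, if additionally q ≥ 0.3 and x₀ ≤ -e^π/2 (so that q·x_s ≤ q·x₀ < -3 for all s), then for every s ≥ 1: if θ(q,x_s) ≥ 1 then θ(q, x_{s+1}) < -2 < 0, and if θ(q,x_s) < 0 then θ(q,x_{s+1}) > 1. -/
lemma triexp_succ (k : ℕ) : (k + 1) * ((k + 1) + 1) / 2 = k * (k + 1) / 2 + (k + 1) := by
  have h1 : (k + 1) * ((k + 1) + 1) = k * (k + 1) + 2 * (k + 1) := by ring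
  have h2 : 2 ∣ k * (k + 1) := (Nat.even_mul_succ_self k).two_dvd
  omega

lemma summable_thetaR (q : ℝ) (hq0 : 0 < q) (hq1 : q < 1) (x : ℝ) :
    Summable (fun j : ℕ => q ^ (j * (j + 1) / 2) * x ^ j) := by
  apply summable_of_ratio_norm_eventually_le (r := 1/2) (by norm_num)
  obtain ⟨N, hN⟩ := exists_pow_lt_of_lt_one
    (show (0:ℝ) < 1/(2*(|x|+1)) by positivity) hq1
  filter_upwards [Filter.eventually_ge_atTop N] with n hn
  have hxpos : (0:ℝ) ≤ |x| := abs_nonneg x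
  have hq0' : (0:ℝ) ≤ q := hq0.le
  have hkey : ‖q ^ ((n+1) * ((n+1) + 1) / 2) * x ^ (n+1)‖
      = (q ^ (n+1) * |x|) * ‖q ^ (n * (n + 1) / 2) * x ^ n‖ := by
    simp only [norm_mul, norm_pow, Real.norm_eq_abs, abs_of_nonneg hq0', triexp_succ,
      pow_add, pow_succ]
    ring
  rw [hkey]
  have hle : q ^ (n+1) * |x| ≤ 1/2 := by
    have h1 : q ^ (n+1) ≤ q ^ N := pow_le_pow_of_le_one hq0' hq1.le (by omega)
    have h2 : (1/(2*(|x|+1))) * (|x|+1) = 1/2 := by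
      field_simp
    nlinarith [pow_nonneg hq0' (n+1), pow_nonneg hq0' N]
  exact mul_le_mul_of_nonneg_right hle (norm_nonneg _)

lemma thetaR_funct (q : ℝ) (hq0 : 0 < q) (hq1 : q < 1) (x : ℝ) :
    thetaR q (x / q) = 1 + x * thetaR q x := by
  have hs : Summable (fun j : ℕ => q ^ (j * (j + 1) / 2) * (x / q) ^ j) :=
    summable_thetaR q hq0 hq1 (x / q)
  unfold thetaR
  rw [Summable.tsum_eq_zero_add hs]
  have h0 : q ^ (0 * (0 + 1) / 2) * (x / q) ^ 0 = 1 := by norm_num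
  rw [h0]
  congr 1
  rw [← tsum_mul_left]
  apply tsum_congr
  intro k
  have hq0' : q ≠ 0 := ne_of_gt hq0
  rw [triexp_succ, pow_add, div_pow]
  field_simp
  ring

theorem thetaR_iteration_step (q x₀ : ℝ) (hq : q ∈ Set.Ioo (0 : ℝ) 1) (hx₀ : x₀ < 0)
    (hzero : thetaR q x₀ = 0) :
    thetaR q (x₀ / q ^ 1) = 1 ∧
    (0.3 ≤ q → x₀ ≤ -(Real.exp Real.pi) / 2 →
      ∀ s : ℕ, 1 ≤ s →
        (1 ≤ thetaR q (x₀ / q ^ s) → thetaR q (x₀ / q ^ (s + 1)) < -2) ∧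
        (thetaR q (x₀ / q ^ s) < 0 → 1 < thetaR q (x₀ / q ^ (s + 1)))) := by
  obtain ⟨hq0, hq1⟩ := hq
  constructor
  · rw [pow_one, thetaR_funct q hq0 hq1, hzero]
    ring
  · intro _ hx s _
    set xs := x₀ / q ^ s with hxs_def
    have hqs : 0 < q ^ s := pow_pos hq0 s
    have hstep : thetaR q (x₀ / q ^ (s + 1)) = 1 + xs * thetaR q xs := by
      have h : x₀ / q ^ (s + 1) = xs / q := by
        rw [hxs_def, pow_succ, ← div_div]
      rw [h, thetaR_funct q hq0 hq1]
    have he : Real.exp Real.pi > 6 := by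
      have hpi : Real.pi > 3 := Real.pi_gt_three
      have h1 : Real.exp 3 ≤ Real.exp Real.pi := Real.exp_le_exp.mpr hpi.le
      have h2 : (2.7182818283:ℝ) < Real.exp 1 := Real.exp_one_gt_d9
      have h3 : Real.exp 3 = (Real.exp 1) ^ 3 := by
        rw [show (3:ℝ) = (3:ℕ) * 1 by norm_num, Real.exp_nat_mul]
      have h4 : (2.7182818283:ℝ) ^ 3 < (Real.exp 1) ^ 3 :=
        pow_lt_pow_left₀ h2 (by norm_num) (by norm_num)
      have h5 : (6:ℝ) < (2.7182818283:ℝ) ^ 3 := by norm_num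
      linarith
    have hx3 : x₀ < -3 := by linarith
    have hxsle : xs ≤ x₀ := by
      rw [hxs_def, div_le_iff₀ hqs]
      nlinarith [pow_le_one₀ hq0.le hq1.le (n := s)]
    constructor
    · intro h1
      rw [hstep]
      nlinarith
    · intro h0
      rw [hstep]
      nlinarith
end

section
/- Let q ∈ (0,1), q ≥ 0.3, and let x₀ ≤ -e^π/2 satisfy θ(q,x₀) = 0. Set x_s := x₀/q^s. Then θ(q, x_s) < 0 for every even s ≥ 2 and θ(q, x_s) > 0 for every odd s ≥ 1. Consequently, each interval (x_{s+1}, x_s) with s ≥ 1 contains a real zero of θ(q,·). -/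
private lemma tri_s14 (j : ℕ) : (j + 1) * (j + 2) / 2 = j * (j + 1) / 2 + (j + 1) := by
  obtain ⟨k, hk⟩ := Nat.even_mul_succ_self j
  have h1 : (j + 1) * (j + 2) = j * (j + 1) + 2 * (j + 1) := by ring
  omega

private lemma theta_summable {q : ℝ} (hq0 : 0 < q) (hq1 : q < 1) (x : ℝ) :
    Summable (fun j : ℕ => q ^ (j * (j + 1) / 2) * x ^ j) := by
  apply summable_of_ratio_norm_eventually_le (r := 1/2) (by norm_num)
  have ht : Filter.Tendsto (fun n : ℕ => q ^ (n + 1) * |x|) Filter.atTop (nhds 0) := by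
    have := (tendsto_pow_atTop_nhds_zero_of_lt_one hq0.le hq1).comp
      (Filter.tendsto_add_atTop_nat 1)
    simpa using this.mul_const |x|
  filter_upwards [ht.eventually (eventually_le_nhds (by norm_num : (0:ℝ) < 1/2))] with n hn
  have e1 : ‖q ^ ((n+1) * (n+2) / 2) * x ^ (n+1)‖
      = (q ^ (n+1) * |x|) * ‖q ^ (n * (n+1) / 2) * x ^ n‖ := by
    simp only [Real.norm_eq_abs, abs_mul, abs_pow, abs_of_pos hq0, tri_s14 n, pow_add, pow_succ]
    ring
  rw [e1]
  exact mul_le_mul_of_nonneg_right hn (norm_nonneg _)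

private lemma theta_fe {q : ℝ} (hq0 : 0 < q) (hq1 : q < 1) (x : ℝ) :
    thetaR q x = 1 + q * x * thetaR q (q * x) := by
  unfold thetaR
  rw [Summable.tsum_eq_zero_add (theta_summable hq0 hq1 x)]
  have h : ∀ j : ℕ, q ^ ((j+1) * ((j+1) + 1) / 2) * x ^ (j+1)
      = (q * x) * (q ^ (j * (j + 1) / 2) * (q * x) ^ j) := by
    intro j
    have : (j+1) * ((j+1)+1) = (j+1) * (j+2) := by ring
    rw [this, tri_s14 j, pow_add, mul_pow]
    ring
  simp only [h]
  rw [tsum_mul_left]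
  norm_num

private lemma theta_contOn {q : ℝ} (hq0 : 0 < q) (hq1 : q < 1) (a b : ℝ) :
    ContinuousOn (thetaR q) (Set.Icc a b) := by
  have : ContinuousOn (fun x : ℝ => ∑' j : ℕ, q ^ (j * (j + 1) / 2) * x ^ j) (Set.Icc a b) := by
    apply continuousOn_tsum (u := fun j : ℕ => q ^ (j * (j + 1) / 2) * (max |a| |b|) ^ j)
    · intro i; exact (continuous_const.mul (continuous_pow i)).continuousOn
    · exact theta_summable hq0 hq1 _
    · intro n x hx
      have hxm : |x| ≤ max |a| |b| := abs_le_max_abs_abs hx.1 hx.2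
      rw [Real.norm_eq_abs, abs_mul, abs_pow, abs_pow, abs_of_pos hq0]
      exact mul_le_mul_of_nonneg_left (pow_le_pow_left₀ (abs_nonneg x) hxm n)
        (le_of_lt (pow_pos hq0 _))
  exact this

theorem thetaR_sign_alternation (q x₀ : ℝ) (hq : q ∈ Set.Ioo (0 : ℝ) 1) (hq3 : 0.3 ≤ q)
    (hx₀ : x₀ ≤ -(Real.exp Real.pi) / 2) (hzero : thetaR q x₀ = 0) :
    (∀ s : ℕ, 2 ≤ s → Even s → thetaR q (x₀ / q ^ s) < 0) ∧
    (∀ s : ℕ, 1 ≤ s → Odd s → 0 < thetaR q (x₀ / q ^ s)) ∧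
    (∀ s : ℕ, 1 ≤ s → ∃ x ∈ Set.Ioo (x₀ / q ^ (s + 1)) (x₀ / q ^ s), thetaR q x = 0) := by
  obtain ⟨hq0, hq1⟩ := hq
  have hqne : q ≠ 0 := ne_of_gt hq0
  have hx2 : x₀ ≤ -2 := by
    have h3 : (3:ℝ) ≤ Real.pi := Real.pi_gt_three.le
    have h4 : (4:ℝ) ≤ Real.exp Real.pi := by
      have h5 := Real.add_one_le_exp (3:ℝ)
      have h6 := Real.exp_le_exp.mpr h3
      linarith
    linarith
  have hxs : ∀ s : ℕ, x₀ / q ^ s ≤ -2 := by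
    intro s
    have hp : 0 < q ^ s := pow_pos hq0 s
    have hp1 : q ^ s ≤ 1 := pow_le_one₀ hq0.le hq1.le
    have h : x₀ ≤ x₀ * q ^ s := by nlinarith
    exact le_trans ((div_le_iff₀ hp).mpr h) hx2
  have step : ∀ s : ℕ, thetaR q (x₀ / q ^ (s+1)) = 1 + (x₀ / q ^ s) * thetaR q (x₀ / q ^ s) := by
    intro s
    have hx : q * (x₀ / q ^ (s+1)) = x₀ / q ^ s := by
      field_simp [pow_succ]; ring
    rw [theta_fe hq0 hq1 (x₀ / q ^ (s+1)), hx]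

  have key : ∀ n : ℕ, 1 ≤ thetaR q (x₀ / q ^ (2*n+1)) ∧ thetaR q (x₀ / q ^ (2*n+2)) < 0 := by
    intro n
    induction n with
    | zero =>
      have h1 : thetaR q (x₀ / q ^ 1) = 1 := by
        rw [step 0]; simp [hzero]
      have h2 : thetaR q (x₀ / q ^ 2) < 0 := by
        rw [step 1, h1]
        have := hxs 1
        linarith
      constructor
      · rw [show 2*0+1 = 1 from rfl, h1]
      · rw [show 2*0+2 = 2 from rfl]; exact h2
    | succ n ih =>
      have hxa := hxs (2*n+2)
      have h1 : 1 ≤ thetaR q (x₀ / q ^ (2*n+3)) := by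
        rw [show 2*n+3 = (2*n+2)+1 from rfl, step (2*n+2)]
        nlinarith [ih.2]
      have hxb := hxs (2*n+3)
      have h2 : thetaR q (x₀ / q ^ (2*n+4)) < 0 := by
        rw [show 2*n+4 = (2*n+3)+1 from rfl, step (2*n+3)]
        nlinarith
      constructor
      · rw [show 2*(n+1)+1 = 2*n+3 from by ring]; exact h1
      · rw [show 2*(n+1)+2 = 2*n+4 from by ring]; exact h2
  have neg : ∀ s : ℕ, 2 ≤ s → Even s → thetaR q (x₀ / q ^ s) < 0 := by
    intro s hs2 hse
    obtain ⟨k, hk⟩ := hse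
    have hk1 : 1 ≤ k := by omega
    have := (key (k-1)).2
    rwa [show 2*(k-1)+2 = s from by omega] at this
  have pos : ∀ s : ℕ, 1 ≤ s → Odd s → 0 < thetaR q (x₀ / q ^ s) := by
    intro s hs1 hso
    obtain ⟨k, hk⟩ := hso
    have := (key k).1
    rw [show 2*k+1 = s from by omega] at this
    linarith
  refine ⟨neg, pos, ?_⟩
  intro s hs1
  set a := x₀ / q ^ (s+1) with ha
  set b := x₀ / q ^ s with hb
  have hba : b / q = a := by
    rw [ha, hb, div_div, ← pow_succ]
  have hab : a < b := by
    have hb2 := hxs s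
    rw [← hba, div_lt_iff₀ hq0]
    nlinarith
  have cont := theta_contOn hq0 hq1 a b
  rcases Nat.even_or_odd s with hse | hso
  · have hfb : thetaR q b < 0 := neg s (by obtain ⟨k,hk⟩ := hse; omega) hse
    have hfa : 0 < thetaR q a := pos (s+1) (by omega) (Even.add_one hse)
    have h0 : (0:ℝ) ∈ Set.Ioo (thetaR q b) (thetaR q a) := ⟨hfb, hfa⟩
    obtain ⟨x, hx, hfx⟩ := intermediate_value_Ioo' hab.le cont h0
    exact ⟨x, hx, hfx⟩
  · have hfb : 0 < thetaR q b := pos s hs1 hso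
    have hfa : thetaR q a < 0 := neg (s+1) (by omega) (Odd.add_one hso)
    have h0 : (0:ℝ) ∈ Set.Ioo (thetaR q a) (thetaR q b) := ⟨hfa, hfb⟩
    obtain ⟨x, hx, hfx⟩ := intermediate_value_Ioo hab.le cont h0
    exact ⟨x, hx, hfx⟩
end

section
/- Let q ∈ (-1,0) with |q·x₀| > 3, where x₀ > 0 satisfies θ(q,x₀) = 0 and x₀ > 3. Set x_j := x₀/q^j, so x_{2m} > 0 and x_{2m+1} < 0 and |x_j| > 3 for all j. Then θ(q,x₁) = 1 > 0, θ(q,x₂) < -2 < 0, θ(q, x_{4m+2}) < -2 < 0 and θ(q, x_{4m+4}) > 2 > 0 for all m ≥ 0. Consequently each interval (x_{4m+2}, x_{4m+4}) contains a real zero of θ(q,·). -/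
lemma tri_succ (n : ℕ) : (n + 1) * (n + 1 + 1) / 2 = n * (n + 1) / 2 + (n + 1) := by
  obtain ⟨k, hk⟩ := Nat.even_mul_succ_self n
  have h : (n + 1) * (n + 1 + 1) = 2 * k + 2 * (n + 1) := by
    rw [show (n + 1) * (n + 1 + 1) = n * (n + 1) + 2 * (n + 1) from by ring, hk]; ring
  rw [h, hk]; omega

lemma thetaR_summable (q x : ℝ) (hq : |q| < 1) :
    Summable (fun j : ℕ => q ^ (j * (j + 1) / 2) * x ^ j) := by
  apply summable_of_ratio_norm_eventually_le (r := 1/2) (by norm_num)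
  have h0 : Filter.Tendsto (fun n : ℕ => |q| ^ (n + 1) * |x|) Filter.atTop (nhds 0) := by
    have := (tendsto_pow_atTop_nhds_zero_of_lt_one (abs_nonneg q) hq).comp
      (Filter.tendsto_add_atTop_nat 1)
    simpa using this.mul_const |x|
  filter_upwards [h0.eventually_lt_const (show (0:ℝ) < 1/2 by norm_num)] with n hn
  have hfn : ‖q ^ ((n+1) * ((n+1) + 1) / 2) * x ^ (n+1)‖
      = (|q| ^ (n + 1) * |x|) * ‖q ^ (n * (n + 1) / 2) * x ^ n‖ := by
    rw [tri_succ]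
    simp [abs_mul, abs_pow, pow_add, pow_succ]
    ring
  rw [hfn]
  have hnn : (0:ℝ) ≤ ‖q ^ (n * (n + 1) / 2) * x ^ n‖ := norm_nonneg _
  exact mul_le_mul_of_nonneg_right hn.le hnn

lemma thetaR_funcEq (q x : ℝ) (hq0 : q ≠ 0) (hq : |q| < 1) :
    thetaR q (x / q) = 1 + x * thetaR q x := by
  unfold thetaR
  rw [Summable.tsum_eq_zero_add (thetaR_summable q (x / q) hq)]
  have h1 : (q : ℝ) ^ (0 * (0 + 1) / 2) * (x / q) ^ 0 = 1 := by norm_num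
  rw [h1]
  congr 1
  rw [← tsum_mul_left]
  congr 1; funext j
  rw [tri_succ, pow_add, div_pow, pow_succ]
  have hqj : (q:ℝ) ^ (j+1) ≠ 0 := pow_ne_zero _ hq0
  field_simp
  ring

lemma thetaR_continuousOn (q a b : ℝ) (hq : |q| < 1) :
    ContinuousOn (fun x => thetaR q x) (Set.Icc a b) := by
  unfold thetaR
  apply continuousOn_tsum (u := fun j => |q| ^ (j * (j + 1) / 2) * (max |a| |b|) ^ j)
  · intro i; exact (continuous_const.mul (continuous_pow i)).continuousOn
  · have := thetaR_summable |q| (max |a| |b|) (by rwa [abs_abs])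
    simpa using this
  · intro n x hx
    rw [norm_mul, norm_pow, norm_pow]
    apply mul_le_mul (by simp) _ (by positivity) (by positivity)
    apply pow_le_pow_left₀ (norm_nonneg x)
    simpa using abs_le_max_abs_abs hx.1 hx.2

theorem thetaR_negative_q_iteration (q x₀ : ℝ) (hq : q ∈ Set.Ioo (-1 : ℝ) 0)
    (hx₀ : 3 < x₀) (hqx : 3 < |q * x₀|) (hzero : thetaR q x₀ = 0) :
    thetaR q (x₀ / q ^ 1) = 1 ∧
    thetaR q (x₀ / q ^ 2) < -2 ∧
    (∀ m : ℕ,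
      thetaR q (x₀ / q ^ (4 * m + 2)) < -2 ∧
      2 < thetaR q (x₀ / q ^ (4 * m + 4)) ∧
      ∃ x ∈ Set.Ioo (x₀ / q ^ (4 * m + 2)) (x₀ / q ^ (4 * m + 4)), thetaR q x = 0) := by
  obtain ⟨hq1, hq0⟩ := hq
  have hqne : q ≠ 0 := ne_of_lt hq0
  have habs : |q| < 1 := abs_lt.mpr ⟨hq1, lt_trans hq0 one_pos⟩
  -- positivity / negativity and magnitude of x_j
  have hxe : ∀ j : ℕ, Even j → 3 < x₀ / q ^ j := by
    intro j hj
    have hpos : 0 < q ^ j := hj.pow_pos hqne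
    have hle : q ^ j ≤ 1 := by
      calc q ^ j ≤ |q ^ j| := le_abs_self _
        _ = |q| ^ j := abs_pow q j
        _ ≤ 1 := pow_le_one₀ (abs_nonneg q) habs.le
    rw [lt_div_iff₀ hpos]
    nlinarith
  have hxo : ∀ j : ℕ, Odd j → x₀ / q ^ j < -3 := by
    intro j hj
    have hneg : q ^ j < 0 := hj.pow_neg hq0
    have hge : -1 ≤ q ^ j := by
      have : |q ^ j| ≤ 1 := by
        rw [abs_pow]; exact pow_le_one₀ (abs_nonneg q) habs.le
      linarith [(abs_le.mp this).1]
    rw [div_lt_iff_of_neg hneg]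
    nlinarith
  -- the recurrence
  have step : ∀ j : ℕ,
      thetaR q (x₀ / q ^ (j + 1)) = 1 + (x₀ / q ^ j) * thetaR q (x₀ / q ^ j) := by
    intro j
    have h : x₀ / q ^ (j + 1) = (x₀ / q ^ j) / q := by
      rw [pow_succ, ← div_div]
    rw [h, thetaR_funcEq q _ hqne habs]
  have t1 : thetaR q (x₀ / q ^ 1) = 1 := by
    have := step 0
    simpa [hzero] using this
  have t2 : thetaR q (x₀ / q ^ 2) < -2 := by
    have h := step 1
    rw [t1] at h
    have := hxo 1 ⟨0, by ring⟩
    rw [h]; linarith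
  have stepA : ∀ n : ℕ, Even n → thetaR q (x₀ / q ^ n) < -2 →
      thetaR q (x₀ / q ^ (n + 1)) < -2 := by
    intro n he ht; rw [step n]; nlinarith [hxe n he]
  have stepB : ∀ n : ℕ, Odd n → thetaR q (x₀ / q ^ n) < -2 →
      2 < thetaR q (x₀ / q ^ (n + 1)) := by
    intro n ho ht; rw [step n]; nlinarith [hxo n ho]
  have stepC : ∀ n : ℕ, Even n → 2 < thetaR q (x₀ / q ^ n) →
      2 < thetaR q (x₀ / q ^ (n + 1)) := by
    intro n he ht; rw [step n]; nlinarith [hxe n he]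
  have stepD : ∀ n : ℕ, Odd n → 2 < thetaR q (x₀ / q ^ n) →
      thetaR q (x₀ / q ^ (n + 1)) < -2 := by
    intro n ho ht; rw [step n]; nlinarith [hxo n ho]
  have key : ∀ m : ℕ, thetaR q (x₀ / q ^ (4 * m + 2)) < -2 ∧
      2 < thetaR q (x₀ / q ^ (4 * m + 4)) := by
    intro m
    induction m with
    | zero =>
      refine ⟨by simpa using t2, ?_⟩
      have h3 : thetaR q (x₀ / q ^ 3) < -2 := stepA 2 ⟨1, by ring⟩ t2
      have h4 : 2 < thetaR q (x₀ / q ^ 4) := stepB 3 ⟨1, by ring⟩ h3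
      simpa using h4
    | succ m ih =>
      have h5 : 2 < thetaR q (x₀ / q ^ (4 * m + 5)) :=
        stepC (4 * m + 4) ⟨2 * m + 2, by ring⟩ ih.2
      have h6 : thetaR q (x₀ / q ^ (4 * m + 6)) < -2 :=
        stepD (4 * m + 5) ⟨2 * m + 2, by ring⟩ h5
      have h7 : thetaR q (x₀ / q ^ (4 * m + 7)) < -2 :=
        stepA (4 * m + 6) ⟨2 * m + 3, by ring⟩ h6
      have h8 : 2 < thetaR q (x₀ / q ^ (4 * m + 8)) :=
        stepB (4 * m + 7) ⟨2 * m + 3, by ring⟩ h7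
      constructor
      · rw [show 4 * (m + 1) + 2 = 4 * m + 6 from by ring]; exact h6
      · rw [show 4 * (m + 1) + 4 = 4 * m + 8 from by ring]; exact h8
  refine ⟨t1, t2, fun m => ?_⟩
  obtain ⟨ka, kb⟩ := key m
  refine ⟨ka, kb, ?_⟩
  set a := x₀ / q ^ (4 * m + 2) with ha
  set b := x₀ / q ^ (4 * m + 4) with hb
  have hea : Even (4 * m + 2) := ⟨2 * m + 1, by ring⟩
  have heb : Even (4 * m + 4) := ⟨2 * m + 2, by ring⟩
  have hpa : 0 < q ^ (4 * m + 2) := hea.pow_pos hqne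
  have hpb : 0 < q ^ (4 * m + 4) := heb.pow_pos hqne
  have hab : a < b := by
    rw [ha, hb, div_lt_div_iff₀ hpa hpb]
    have hq2 : q ^ 2 < 1 := by
      nlinarith
    have hsplit : q ^ (4 * m + 4) = q ^ (4 * m + 2) * q ^ 2 := by ring
    rw [hsplit]
    nlinarith [mul_pos (mul_pos (show (0:ℝ) < x₀ by linarith) hpa)
      (show (0:ℝ) < 1 - q ^ 2 by linarith)]
  have hcont : ContinuousOn (fun x => thetaR q x) (Set.Icc a b) :=
    thetaR_continuousOn q a b habs
  have := intermediate_value_Ioo hab.le hcont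
  have h0 : (0:ℝ) ∈ Set.Ioo (thetaR q a) (thetaR q b) := ⟨by linarith, by linarith⟩
  obtain ⟨x, hx, hfx⟩ := this h0
  exact ⟨x, hx, hfx⟩
end
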